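/- arXiv:1804.02563 — 7 statements merged into one kernel-verified Lean document; each statement's English description precedes it below -/
import Mathlib

section
/- Let P be a parabolic partition of the affine root system Δ containing δ. If α, β ∈ P are both good roots and α+β ∈ P, then α+β is a good root of P. -/
/-!
STATEMENT 3: Let P be a parabolic partition of the affine root system Δ containing δ.
If α, β ∈ P are both good roots and α + β ∈ P, then α + β is a good root of P.
-/

/-- The affine root system Δ = {α + nδ : α ∈ Δ̇ ∪ {0}, n ∈ ℤ} \ {0}. -/
def AffineRoots {V : Type*} [AddCommGroup V] (D : Set V) (δ : V) : Set V :=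
  {x | x ≠ 0 ∧ ∃ α ∈ D ∪ {0}, ∃ n : ℤ, x = α + n • δ}

/-- A root γ ∈ P is good if (γ + ℤ_{<0} δ) ∩ P is finite. -/
def IsGoodRoot {V : Type*} [AddCommGroup V] (P : Set V) (δ : V) (γ : V) : Prop :=
  {n : ℤ | n < 0 ∧ γ + n • δ ∈ P}.Finite

theorem good_roots_sum_good
    {V : Type*} [AddCommGroup V]
    (D : Set V) (hfin : D.Finite) (h0 : (0 : V) ∉ D)
    (hsym : ∀ β ∈ D, -β ∈ D) (δ : V)
    (P : Set V) (hPsub : P ⊆ AffineRoots D δ)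
    (hadd : ∀ a ∈ P, ∀ b ∈ P, a + b ∈ AffineRoots D δ → a + b ∈ P)
    (hcover : P ∪ {x | -x ∈ P} = AffineRoots D δ)
    (hdisj : P ∩ {x | -x ∈ P} = ∅)
    (hδ : δ ∈ P)
    (α β : V) (hα : α ∈ P) (hβ : β ∈ P)
    (hgα : IsGoodRoot P δ α) (hgβ : IsGoodRoot P δ β)
    (hαβ : α + β ∈ P) :
    IsGoodRoot P δ (α + β) := by
  classical
  have hδΔ := hPsub hδ
  have hδne : δ ≠ 0 := hδΔ.1
  -- -δ ∉ P
  have hnegδ : -δ ∉ P := by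
    intro h
    have hmem : -δ ∈ P ∩ {x | -x ∈ P} := ⟨h, by simpa using hδ⟩
    rw [hdisj] at hmem
    exact hmem
  -- positive multiples of δ lie in P
  have hmulP : ∀ n : ℕ, ((n : ℤ) + 1) • δ ∈ P := by
    intro n
    induction n with
    | zero => simpa using hδ
    | succ n ih =>
      have heq : (((n + 1 : ℕ) : ℤ) + 1) • δ = ((n : ℤ) + 1) • δ + δ := by
        push_cast
        rw [show ((n : ℤ) + 1 + 1) = ((n : ℤ) + 1) + 1 by ring, add_smul, one_smul]
      rw [heq]
      have hne : ((n : ℤ) + 1) • δ + δ ≠ 0 := by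
        intro h
        have h2 : ((n : ℤ) + 1) • δ = -δ := eq_neg_of_add_eq_zero_left h
        rw [h2] at ih
        exact hnegδ ih
      refine hadd _ ih _ hδ ⟨hne, 0, Or.inr rfl, (n : ℤ) + 2, ?_⟩
      have h2 : ((n : ℤ) + 2) • δ = ((n : ℤ) + 1) • δ + (1 : ℤ) • δ := by
        rw [← add_smul]; ring_nf
      rw [zero_add, h2, one_smul]
  -- δ has infinite order
  have hord : ∀ k : ℤ, k ≠ 0 → k • δ ≠ 0 := by
    have hpos : ∀ k : ℤ, 0 < k → k • δ ≠ 0 := by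
      intro k hk
      have h1 : k • δ ∈ P := by
        have := hmulP (k - 1).toNat
        rwa [Int.toNat_of_nonneg (by omega), sub_add_cancel] at this
      exact (hPsub h1).1
    intro k hk h
    rcases lt_or_gt_of_ne hk with hlt | hgt
    · have : (-k) • δ = 0 := by rw [neg_smul, h, neg_zero]
      exact hpos (-k) (by omega) this
    · exact hpos k hgt h
  -- shift lemma
  have hshift : ∀ γ ∈ AffineRoots D δ, ∀ m : ℤ, γ + m • δ ≠ 0 →
      γ + m • δ ∈ AffineRoots D δ := by
    rintro γ ⟨-, γ0, hγ0, k, rfl⟩ m hne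
    exact ⟨hne, γ0, hγ0, k + m, by rw [add_smul]; abel⟩
  -- the set of m with α + m•δ = 0 is finite (subsingleton)
  have hzfin : {m : ℤ | α + m • δ = 0}.Finite := by
    apply Set.Subsingleton.finite
    intro m1 h1 m2 h2
    by_contra hne
    have h3 : (m1 - m2) • δ = (α + m1 • δ) - (α + m2 • δ) := by
      rw [sub_smul]; abel
    rw [h1, h2, sub_zero] at h3
    exact hord (m1 - m2) (sub_ne_zero.mpr hne) h3
  -- lower bound for the bad sets
  obtain ⟨L, hL⟩ := ((hgα.union hgβ).union hzfin).bddBelow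
  set L0 : ℤ := min L 0 with hL0def
  have hαfact : ∀ m : ℤ, m < L0 → α + m • δ ∉ P ∧ α + m • δ ≠ 0 := by
    intro m hm
    constructor
    · intro h
      have hmem : m ∈ ({n : ℤ | n < 0 ∧ α + n • δ ∈ P} ∪ {n : ℤ | n < 0 ∧ β + n • δ ∈ P})
          ∪ {m : ℤ | α + m • δ = 0} := Or.inl (Or.inl ⟨by omega, h⟩)
      have := hL hmem
      omega
    · intro h
      have hmem : m ∈ ({n : ℤ | n < 0 ∧ α + n • δ ∈ P} ∪ {n : ℤ | n < 0 ∧ β + n • δ ∈ P})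
          ∪ {m : ℤ | α + m • δ = 0} := Or.inr h
      have := hL hmem
      omega
  have hβfact : ∀ k : ℤ, k < L0 → β + k • δ ∉ P := by
    intro k hk h
    have hmem : k ∈ ({n : ℤ | n < 0 ∧ α + n • δ ∈ P} ∪ {n : ℤ | n < 0 ∧ β + n • δ ∈ P})
        ∪ {m : ℤ | α + m • δ = 0} := Or.inl (Or.inr ⟨by omega, h⟩)
    have := hL hmem
    omega
  -- main argument
  apply (Set.finite_Icc (2 * L0 - 2) (-1)).subset
  rintro n ⟨hn0, hnP⟩
  simp only [Set.mem_Icc]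
  refine ⟨?_, by omega⟩
  by_contra hlt
  push_neg at hlt
  have hlt' : n < 2 * L0 - 2 := by omega
  -- choose m ∈ {L0 - 1, L0 - 2} with β + (n - m) • δ ≠ 0
  have hm_ex : ∃ m : ℤ, m < L0 ∧ L0 - 2 ≤ m ∧ β + (n - m) • δ ≠ 0 := by
    by_cases h1 : β + (n - (L0 - 1)) • δ = 0
    · refine ⟨L0 - 2, by omega, by omega, ?_⟩
      intro h2
      have h3 : δ = (β + (n - (L0 - 2)) • δ) - (β + (n - (L0 - 1)) • δ) := by
        rw [show (n - (L0 - 2)) = (n - (L0 - 1)) + 1 by ring, add_smul, one_smul]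
        abel
      rw [h1, h2, sub_zero] at h3
      exact hδne h3
    · exact ⟨L0 - 1, by omega, by omega, h1⟩
  obtain ⟨m, hmlt, hmge, hbne⟩ := hm_ex
  obtain ⟨hαnP, hαne⟩ := hαfact m hmlt
  have hαΔ : α + m • δ ∈ AffineRoots D δ := hshift α (hPsub hα) m hαne
  have hneg : -(α + m • δ) ∈ P := by
    rw [← hcover] at hαΔ
    rcases hαΔ with h | h
    · exact absurd h hαnP
    · exact h
  have hsum : (α + β + n • δ) + (-(α + m • δ)) = β + (n - m) • δ := by
    rw [sub_smul]; abel
  have hsumΔ : β + (n - m) • δ ∈ AffineRoots D δ := hshift β (hPsub hβ) (n - m) hbne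
  have hinP : β + (n - m) • δ ∈ P := by
    have h := hadd _ hnP _ hneg (by rw [hsum]; exact hsumΔ)
    rwa [hsum] at h
  exact hβfact (n - m) (by omega) hinP
end

section
/- Let P be a parabolic partition of the affine root system Δ containing δ, and let β = α + kδ ∈ P with α ∈ Δ̇, k ∈ Z. If β is a good root of P, then either α ∈ P and α is good, or −α ∈ P and −α is good. -/
theorem good_root_finite_part
    {V : Type*} [AddCommGroup V]
    (D : Set V) (hfin : D.Finite) (h0 : (0 : V) ∉ D)
    (hsym : ∀ β ∈ D, -β ∈ D) (δ : V)
    (P : Set V) (hPsub : P ⊆ AffineRoots D δ)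
    (hadd : ∀ a ∈ P, ∀ b ∈ P, a + b ∈ AffineRoots D δ → a + b ∈ P)
    (hcover : P ∪ {x | -x ∈ P} = AffineRoots D δ)
    (hdisj : P ∩ {x | -x ∈ P} = ∅)
    (hδ : δ ∈ P)
    (α : V) (hαD : α ∈ D) (k : ℤ)
    (hβ : α + k • δ ∈ P) (hgood : IsGoodRoot P δ (α + k • δ)) :
    (α ∈ P ∧ IsGoodRoot P δ α) ∨ (-α ∈ P ∧ IsGoodRoot P δ (-α)) := by
  classical
  have hδ0 : δ ≠ 0 := (hPsub hδ).1
  -- chain lemma: if no multiple up to j+1 vanishes, then (j+1)•δ ∈ P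
  have chain : ∀ j : ℕ, (∀ i : ℕ, 1 ≤ i → i ≤ j + 1 → ((i : ℤ)) • δ ≠ 0) →
      (((j + 1 : ℕ) : ℤ)) • δ ∈ P := by
    intro j
    induction j with
    | zero => intro _; simpa using hδ
    | succ j ih =>
      intro h
      have hj : (((j + 1 : ℕ) : ℤ)) • δ ∈ P := ih (fun i h1 h2 => h i h1 (by omega))
      have hne : (((j + 2 : ℕ) : ℤ)) • δ ≠ 0 := h (j + 2) (by omega) (by omega)
      have heq : (((j + 1 : ℕ) : ℤ)) • δ + δ = (((j + 2 : ℕ) : ℤ)) • δ := by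
        push_cast
        rw [add_smul, add_smul]
        simp [one_smul]
        abel
      have hmem : (((j + 1 : ℕ) : ℤ)) • δ + δ ∈ AffineRoots D δ := by
        refine ⟨by rw [heq]; exact hne, 0, Or.inr rfl, ((j + 2 : ℕ) : ℤ), by rw [heq, zero_add]⟩
      have := hadd _ hj _ hδ hmem
      rwa [heq] at this
  -- δ is torsion-free
  have tf : ∀ n : ℤ, n • δ = 0 → n = 0 := by
    intro n hn
    by_contra hne
    have hex : ∃ m : ℕ, 0 < m ∧ ((m : ℤ)) • δ = 0 := by
      rcases lt_or_gt_of_ne hne with hlt | hgt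
      · refine ⟨(-n).toNat, by omega, ?_⟩
        have : ((((-n).toNat : ℤ))) = -n := by omega
        rw [this, neg_smul, hn, neg_zero]
      · refine ⟨n.toNat, by omega, ?_⟩
        have : (((n.toNat : ℤ))) = n := by omega
        rw [this, hn]
    let m := Nat.find hex
    have hm : 0 < m ∧ ((m : ℤ)) • δ = 0 := Nat.find_spec hex
    have hmin : ∀ i : ℕ, i < m → ¬ (0 < i ∧ ((i : ℤ)) • δ = 0) := fun i hi => Nat.find_min hex hi
    rcases Nat.lt_or_ge m 2 with hm2 | hm2
    · -- m = 1, so δ = 0, contradiction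
      have : m = 1 := by omega
      rw [this] at hm
      simp at hm
      exact hδ0 hm
    · -- m ≥ 2 : (m-1)•δ ∈ P and (m-1)•δ = -δ
      obtain ⟨j, hj⟩ : ∃ j : ℕ, m = j + 2 := ⟨m - 2, by omega⟩
      have hP1 : (((j + 1 : ℕ) : ℤ)) • δ ∈ P := by
        apply chain
        intro i h1 h2 hzero
        exact hmin i (by omega) ⟨by omega, hzero⟩
      have hneg : (((j + 1 : ℕ) : ℤ)) • δ = -δ := by
        have hm0 : ((m : ℤ)) • δ = 0 := hm.2
        have h1 : ((m : ℤ)) = (((j + 1 : ℕ) : ℤ)) + 1 := by omega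
        rw [h1, add_smul, one_smul] at hm0
        exact eq_neg_of_add_eq_zero_left hm0
      rw [hneg] at hP1
      have : δ ∈ P ∩ {x | -x ∈ P} := ⟨hδ, hP1⟩
      rw [hdisj] at this
      exact this
  -- positive multiples of δ are in P
  have posδ : ∀ m : ℤ, 1 ≤ m → m • δ ∈ P := by
    intro m hm
    obtain ⟨j, hj⟩ : ∃ j : ℕ, m = ((j : ℤ)) + 1 := ⟨(m - 1).toNat, by omega⟩
    have : m = (((j + 1 : ℕ) : ℤ)) := by push_cast; omega
    rw [this]
    apply chain
    intro i h1 h2 hzero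
    have := tf _ hzero
    omega
  -- α is a root
  have hαAR : α ∈ AffineRoots D δ :=
    ⟨fun h => h0 (h ▸ hαD), α, Or.inl hαD, 0, by simp⟩
  have hα' : α ∈ P ∪ {x | -x ∈ P} := by rw [hcover]; exact hαAR
  rcases hα' with hαP | hαP
  · -- α ∈ P : show α is good
    left
    refine ⟨hαP, ?_⟩
    have hsub : {n : ℤ | n < 0 ∧ α + n • δ ∈ P} ⊆
        ((· + k) '' {n : ℤ | n < 0 ∧ (α + k • δ) + n • δ ∈ P}) ∪ Set.Icc k 0 := by
      intro n hn
      rcases lt_or_ge n k with h | h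
      · left
        refine ⟨n - k, ⟨by omega, ?_⟩, by ring⟩
        have : (α + k • δ) + (n - k) • δ = α + n • δ := by
          rw [sub_smul]; abel
        rw [this]
        exact hn.2
      · right
        exact ⟨h, le_of_lt hn.1⟩
    exact Set.Finite.subset ((hgood.image _).union (Set.finite_Icc k 0)) hsub
  · -- -α ∈ P : show -α is good
    right
    refine ⟨hαP, ?_⟩
    by_contra hbad
    have hinf : {n : ℤ | n < 0 ∧ -α + n • δ ∈ P}.Infinite := hbad
    have hexn : ∃ n : ℤ, (n < 0 ∧ -α + n • δ ∈ P) ∧ n < -k := by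
      by_contra h
      push_neg at h
      apply hinf
      apply Set.Finite.subset (Set.finite_Icc (-k) 0)
      intro n hn
      exact ⟨h n hn, le_of_lt hn.1⟩
    obtain ⟨n, ⟨hn0, hnP⟩, hnk⟩ := hexn
    have hsum : (α + k • δ) + (-α + n • δ) = (k + n) • δ := by
      rw [add_smul]; abel
    have hknne : (k + n) • δ ≠ 0 := fun h => by have := tf _ h; omega
    have hAR : (α + k • δ) + (-α + n • δ) ∈ AffineRoots D δ := by
      rw [hsum]
      exact ⟨hknne, 0, Or.inr rfl, k + n, by rw [zero_add]⟩
    have hPk : (k + n) • δ ∈ P := by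
      rw [← hsum]; exact hadd _ hβ _ hnP hAR
    have hPk' : -((k + n) • δ) ∈ P := by
      rw [← neg_smul]
      exact posδ _ (by omega)
    have : (k + n) • δ ∈ P ∩ {x | -x ∈ P} := ⟨hPk, hPk'⟩
    rw [hdisj] at this
    exact this
end

section
/- Let Σ̇ be a set of simple roots of Δ̇ and X ⊆ Σ̇. Then the set P(Σ̇, X) = {α + nδ : α ∈ Δ̇⁺(Σ̇) \ Δ̇⁺(X), n ∈ Z} ∪ {α + nδ : α ∈ Δ̇(X) ∪ {0}, n ∈ Z_{>0}} ∪ Δ̇⁺(X) is a parabolic partition of the affine root system Δ, i.e. it is additively closed, P ∪ (−P) = Δ, and P ∩ (−P) = ∅. -/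
/-!
STATEMENT 6: For a set of simple roots Σ̇ of Δ̇ and X ⊆ Σ̇, the set
P(Σ̇, X) = {α + nδ : α ∈ Δ̇⁺(Σ̇) \ Δ̇⁺(X), n ∈ ℤ}
        ∪ {α + nδ : α ∈ Δ̇(X) ∪ {0}, n > 0}
        ∪ Δ̇⁺(X)
is a parabolic partition of the affine root system Δ: additively closed,
P ∪ (−P) = Δ and P ∩ (−P) = ∅.
-/

def PosRoots {V : Type*} [AddCommGroup V] (Δ : Set V) (S : Finset V) : Set V :=
  {β | β ∈ Δ ∧ ∃ c : V → ℕ, β = ∑ α ∈ S, c α • α}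

def IsBase {V : Type*} [AddCommGroup V] [Module ℚ V] (Δ : Set V) (S : Finset V) : Prop :=
  (S : Set V) ⊆ Δ ∧ LinearIndependent ℚ (fun x : {x : V // x ∈ S} => (x : V)) ∧
    ∀ β ∈ Δ, β ∈ PosRoots Δ S ∨ -β ∈ PosRoots Δ S

/-- Δ̇(X): roots that are integer combinations of elements of X. -/
def RootsOn {V : Type*} [AddCommGroup V] (Δ : Set V) (X : Finset V) : Set V :=
  {β | β ∈ Δ ∧ ∃ c : V → ℤ, β = ∑ α ∈ X, c α • α}

/-- The parabolic partition P(Σ̇, X) of the affine root system. -/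
def PX {V : Type*} [AddCommGroup V] (D : Set V) (δ : V) (S X : Finset V) : Set V :=
  {x | ∃ α ∈ PosRoots D S \ PosRoots D X, ∃ n : ℤ, x = α + n • δ} ∪
  {x | ∃ α ∈ RootsOn D X ∪ {0}, ∃ n : ℤ, 0 < n ∧ x = α + n • δ} ∪
  PosRoots D X

section Aux

variable {V : Type*} [AddCommGroup V] [Module ℚ V] [DecidableEq V]

/-- integer span of `X`, as a predicate. -/
def IsZX (X : Finset V) (γ : V) : Prop := ∃ c : V → ℤ, γ = ∑ α ∈ X, c α • α

lemma isZX_zero (X : Finset V) : IsZX X (0 : V) := ⟨0, by simp⟩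

lemma isZX_neg {X : Finset V} {a : V} (h : IsZX X a) : IsZX X (-a) := by
  obtain ⟨c, hc⟩ := h
  refine ⟨fun v => -(c v), ?_⟩
  rw [hc, ← Finset.sum_neg_distrib]
  exact Finset.sum_congr rfl fun v _ => (neg_smul _ _).symm

lemma isZX_add {X : Finset V} {a b : V} (ha : IsZX X a) (hb : IsZX X b) : IsZX X (a + b) := by
  obtain ⟨c, hc⟩ := ha; obtain ⟨d, hd⟩ := hb
  refine ⟨fun v => c v + d v, ?_⟩
  rw [hc, hd, ← Finset.sum_add_distrib]
  exact Finset.sum_congr rfl fun v _ => (add_smul _ _ _).symm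

lemma zx_of_posX {D : Set V} {X : Finset V} {a : V} (h : a ∈ PosRoots D X) : IsZX X a := by
  obtain ⟨_, c, hc⟩ := h
  refine ⟨fun v => (c v : ℤ), ?_⟩
  rw [hc]
  exact Finset.sum_congr rfl fun v _ => (natCast_zsmul _ _).symm

lemma nat_rep_q (c : V → ℕ) (T : Finset V) :
    ∑ α ∈ T, c α • α = ∑ α ∈ T, ((c α : ℚ)) • α :=
  Finset.sum_congr rfl fun a _ => (Nat.cast_smul_eq_nsmul ℚ _ _).symm

lemma int_rep_q (c : V → ℤ) (T : Finset V) :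
    ∑ α ∈ T, c α • α = ∑ α ∈ T, ((c α : ℚ)) • α :=
  Finset.sum_congr rfl fun a _ => (Int.cast_smul_eq_zsmul ℚ _ _).symm

lemma ext_sum {S X : Finset V} (hX : X ⊆ S) (c : V → ℚ) :
    ∑ α ∈ X, c α • α = ∑ α ∈ S, (if α ∈ X then c α else 0) • α := by
  rw [← Finset.sum_subset hX (fun x _ hx => by simp [hx])]
  exact Finset.sum_congr rfl fun x hx => by simp [hx]

lemma coeff_eq {S : Finset V}
    (hli : LinearIndependent ℚ (fun x : {x : V // x ∈ S} => (x : V)))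
    {c d : V → ℚ} (h : ∑ α ∈ S, c α • α = ∑ α ∈ S, d α • α) : ∀ a ∈ S, c a = d a := by
  have h0 : ∑ x : {x : V // x ∈ S}, (c x - d x) • (x : V) = 0 := by
    rw [Finset.sum_coe_sort S (fun a => (c a - d a) • a)]
    simp [sub_smul, Finset.sum_sub_distrib, h]
  have hz := linearIndependent_iff'.mp hli Finset.univ (fun x => c x - d x) h0
  intro a ha
  have h2 := hz ⟨a, ha⟩ (Finset.mem_univ _)
  simp only at h2
  linarith

variable {D : Set V} {S X : Finset V}

lemma posS_not_neg (h0 : (0 : V) ∉ D)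
    (hli : LinearIndependent ℚ (fun x : {x : V // x ∈ S} => (x : V)))
    {a : V} (h1 : a ∈ PosRoots D S) (h2 : -a ∈ PosRoots D S) : False := by
  obtain ⟨haD, c, hc⟩ := h1
  obtain ⟨_, d, hd⟩ := h2
  have h1 : a = ∑ α ∈ S, ((c α : ℚ)) • α := by rw [hc]; exact nat_rep_q c S
  have h2 : -a = ∑ α ∈ S, ((d α : ℚ)) • α := by rw [hd]; exact nat_rep_q d S
  have hsum : ∑ α ∈ S, ((c α : ℚ) + (d α : ℚ)) • α = ∑ α ∈ S, (0 : ℚ) • α := by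
    calc ∑ α ∈ S, ((c α : ℚ) + (d α : ℚ)) • α
        = ∑ α ∈ S, ((c α : ℚ)) • α + ∑ α ∈ S, ((d α : ℚ)) • α := by
          rw [← Finset.sum_add_distrib]
          exact Finset.sum_congr rfl fun v _ => add_smul _ _ _
      _ = a + -a := by rw [← h1, ← h2]
      _ = ∑ α ∈ S, (0 : ℚ) • α := by simp
  have hco := coeff_eq hli hsum
  have hzero : ∀ α ∈ S, c α = 0 := by
    intro α hα
    have := hco α hα
    have h1 : (0:ℚ) ≤ (c α : ℚ) := Nat.cast_nonneg _
    have h2 : (0:ℚ) ≤ (d α : ℚ) := Nat.cast_nonneg _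
    have : (c α : ℚ) = 0 := by linarith
    exact_mod_cast this
  have : a = 0 := by
    rw [hc]
    exact Finset.sum_eq_zero fun v hv => by rw [hzero v hv, zero_smul]
  exact h0 (this ▸ haD)

lemma pos_add {T : Finset V} {a b : V} (ha : a ∈ PosRoots D T) (hb : b ∈ PosRoots D T)
    (hab : a + b ∈ D) : a + b ∈ PosRoots D T := by
  obtain ⟨_, c, hc⟩ := ha; obtain ⟨_, d, hd⟩ := hb
  refine ⟨hab, fun v => c v + d v, ?_⟩
  rw [hc, hd, ← Finset.sum_add_distrib]
  exact Finset.sum_congr rfl fun v _ => (add_smul _ _ _).symm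

lemma posX_subset_posS (hX : X ⊆ S) {a : V} (h : a ∈ PosRoots D X) : a ∈ PosRoots D S := by
  obtain ⟨haD, c, hc⟩ := h
  refine ⟨haD, fun v => if v ∈ X then c v else 0, ?_⟩
  rw [hc, ← Finset.sum_subset hX (fun x _ hx => by simp [hx])]
  exact Finset.sum_congr rfl fun x hx => by simp [hx]

lemma pos_of_zx (hli : LinearIndependent ℚ (fun x : {x : V // x ∈ S} => (x : V)))
    (hX : X ⊆ S) {a : V} (ha : a ∈ PosRoots D S) (hz : IsZX X a) : a ∈ PosRoots D X := by
  obtain ⟨haD, c, hc⟩ := ha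
  obtain ⟨d, hd⟩ := hz
  have h1 : ∑ α ∈ S, ((c α : ℚ)) • α = ∑ α ∈ S, (if α ∈ X then (d α : ℚ) else 0) • α := by
    rw [← nat_rep_q c S, ← hc, hd, int_rep_q d X, ext_sum hX]
  have hco := coeff_eq hli h1
  refine ⟨haD, c, ?_⟩
  rw [hc]
  refine (Finset.sum_subset hX fun x hxS hxX => ?_).symm
  have := hco x hxS
  rw [if_neg hxX] at this
  have hcx : c x = 0 := by exact_mod_cast this
  simp [hcx]

lemma exists_offX (hX : X ⊆ S) {a : V} {c : V → ℕ} (hc : a = ∑ α ∈ S, c α • α)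
    (hz : ¬ IsZX X a) : ∃ s ∈ S, s ∉ X ∧ 0 < c s := by
  by_contra h
  push_neg at h
  apply hz
  refine ⟨fun v => (c v : ℤ), ?_⟩
  have h2 : a = ∑ α ∈ X, c α • α := by
    rw [hc]
    refine (Finset.sum_subset hX fun x hxS hxX => ?_).symm
    have hle := h x hxS hxX
    have hx0 : c x = 0 := by omega
    simp [hx0]
  rw [h2]
  exact Finset.sum_congr rfl fun v _ => (natCast_zsmul _ _).symm


lemma not_zx_of_rep (hli : LinearIndependent ℚ (fun x : {x : V // x ∈ S} => (x : V)))
    (hX : X ⊆ S) {g : V → ℚ} {v : V} (hv : v = ∑ α ∈ S, g α • α)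
    {s : V} (hs : s ∈ S) (hsX : s ∉ X) (hg : g s ≠ 0) : ¬ IsZX X v := by
  rintro ⟨f, hf⟩
  have h2 : v = ∑ α ∈ S, (if α ∈ X then (f α : ℚ) else 0) • α := by
    rw [hf, int_rep_q f X, ext_sum hX]
  have := coeff_eq hli (hv.symm.trans h2) s hs
  rw [if_neg hsX] at this
  exact hg this

lemma A_add_A (h0 : (0 : V) ∉ D)
    (hli : LinearIndependent ℚ (fun x : {x : V // x ∈ S} => (x : V))) (hX : X ⊆ S)
    {a b : V} (ha : a ∈ PosRoots D S) (haz : ¬ IsZX X a) (hb : b ∈ PosRoots D S)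
    (hab : a + b ∈ D) : a + b ∈ PosRoots D S ∧ ¬ IsZX X (a + b) := by
  refine ⟨pos_add ha hb hab, ?_⟩
  obtain ⟨_, c, hc⟩ := ha
  obtain ⟨_, d, hd⟩ := hb
  obtain ⟨s, hs, hsX, hcs⟩ := exists_offX hX hc haz
  have hrep : a + b = ∑ α ∈ S, ((c α : ℚ) + (d α : ℚ)) • α := by
    rw [hc, hd, nat_rep_q c S, nat_rep_q d S, ← Finset.sum_add_distrib]
    exact Finset.sum_congr rfl fun v _ => (add_smul _ _ _).symm
  refine not_zx_of_rep hli hX hrep hs hsX ?_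
  have h1 : (0:ℚ) < (c s : ℚ) := by exact_mod_cast hcs
  have h2 : (0:ℚ) ≤ (d s : ℚ) := Nat.cast_nonneg _
  intro h; linarith

lemma A_add_Z (h0 : (0 : V) ∉ D)
    (hli : LinearIndependent ℚ (fun x : {x : V // x ∈ S} => (x : V))) (hX : X ⊆ S)
    (hpm : ∀ β ∈ D, β ∈ PosRoots D S ∨ -β ∈ PosRoots D S)
    {a b : V} (ha : a ∈ PosRoots D S) (haz : ¬ IsZX X a) (hb : IsZX X b)
    (hab : a + b ∈ D) : a + b ∈ PosRoots D S ∧ ¬ IsZX X (a + b) := by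
  obtain ⟨haD, c, hc⟩ := ha
  obtain ⟨d, hd⟩ := hb
  obtain ⟨s, hs, hsX, hcs⟩ := exists_offX hX hc haz
  have hrep : a + b = ∑ α ∈ S, ((c α : ℚ) + (if α ∈ X then (d α : ℚ) else 0)) • α := by
    conv_lhs => rw [hc, hd]
    rw [nat_rep_q c S, int_rep_q d X, ext_sum hX, ← Finset.sum_add_distrib]
    exact Finset.sum_congr rfl fun v _ => (add_smul _ _ _).symm
  have hgs : (0:ℚ) < (c s : ℚ) + (if s ∈ X then (d s : ℚ) else 0) := by
    rw [if_neg hsX, add_zero]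
    exact_mod_cast hcs
  constructor
  · rcases hpm _ hab with h | h
    · exact h
    · exfalso
      obtain ⟨_, e, he⟩ := h
      have h2 : -(a+b) = ∑ α ∈ S, ((e α : ℚ)) • α := by rw [he]; exact nat_rep_q e S
      have hz : ∑ α ∈ S, (((c α : ℚ) + (if α ∈ X then (d α : ℚ) else 0)) + (e α : ℚ)) • α
          = ∑ α ∈ S, (0:ℚ) • α := by
        calc ∑ α ∈ S, (((c α : ℚ) + (if α ∈ X then (d α : ℚ) else 0)) + (e α : ℚ)) • α
            = ∑ α ∈ S, ((c α : ℚ) + (if α ∈ X then (d α : ℚ) else 0)) • α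
              + ∑ α ∈ S, ((e α : ℚ)) • α := by
              rw [← Finset.sum_add_distrib]
              exact Finset.sum_congr rfl fun v _ => add_smul _ _ _
          _ = (a + b) + -(a+b) := by rw [← hrep, ← h2]
          _ = 0 := add_neg_cancel _
          _ = ∑ α ∈ S, (0 : ℚ) • α := by simp
      have := coeff_eq hli hz s hs
      have he2 : (0:ℚ) ≤ (e s : ℚ) := Nat.cast_nonneg _
      linarith
  · exact not_zx_of_rep hli hX hrep hs hsX (by intro h; rw [h] at hgs; exact lt_irrefl 0 hgs)

/-- canonical disjunction describing membership of `α + n • δ` in `PX`. -/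
def QQ (D : Set V) (S X : Finset V) (α : V) (n : ℤ) : Prop :=
  (α ∈ PosRoots D S ∧ ¬ IsZX X α) ∨
  ((α ∈ D ∨ α = 0) ∧ IsZX X α ∧ 0 < n) ∨
  (α ∈ PosRoots D X ∧ n = 0)

lemma qq_mem {α : V} {n : ℤ} (h : QQ D S X α n) : α ∈ D ∨ α = 0 := by
  rcases h with ⟨h1, _⟩ | ⟨h1, _, _⟩ | ⟨h1, _⟩
  · exact Or.inl h1.1
  · exact h1
  · exact Or.inl h1.1

lemma memPX_iff (hli : LinearIndependent ℚ (fun x : {x : V // x ∈ S} => (x : V)))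
    (hX : X ⊆ S) {δ x : V} :
    x ∈ PX D δ S X ↔ ∃ α, ∃ n : ℤ, x = α + n • δ ∧ QQ D S X α n := by
  constructor
  · rintro ((⟨α, ⟨hαS, hαX⟩, n, rfl⟩ | ⟨α, hα, n, hn, rfl⟩) | hx)
    · exact ⟨α, n, rfl, Or.inl ⟨hαS, fun hz => hαX (pos_of_zx hli hX hαS hz)⟩⟩
    · rcases hα with ⟨hαD, cc, hcc⟩ | hα
      · exact ⟨α, n, rfl, Or.inr (Or.inl ⟨Or.inl hαD, ⟨cc, hcc⟩, hn⟩)⟩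
      · rw [Set.mem_singleton_iff] at hα
        subst hα
        exact ⟨0, n, rfl, Or.inr (Or.inl ⟨Or.inr rfl, isZX_zero X, hn⟩)⟩
    · exact ⟨x, 0, by simp, Or.inr (Or.inr ⟨hx, rfl⟩)⟩
  · rintro ⟨α, n, rfl, (⟨h1, h2⟩ | ⟨h1, h2, h3⟩ | ⟨h1, h2⟩)⟩
    · exact Or.inl (Or.inl ⟨α, ⟨h1, fun hp => h2 (zx_of_posX hp)⟩, n, rfl⟩)
    · refine Or.inl (Or.inr ⟨α, ?_, n, h3, rfl⟩)
      rcases h1 with h1 | h1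
      · exact Or.inl ⟨h1, h2⟩
      · exact Or.inr (by rw [Set.mem_singleton_iff, h1])
    · subst h2
      exact Or.inr (by simpa using h1)

lemma uniq_decomp {δ : V} (hδ : ∀ n : ℤ, n • δ ∈ Submodule.span ℚ D → n = 0)
    {a b : V} (ha : a ∈ Submodule.span ℚ D) (hb : b ∈ Submodule.span ℚ D)
    {m n : ℤ} (h : a + m • δ = b + n • δ) : a = b ∧ m = n := by
  have h1 : (m - n) • δ = b - a := by
    have h2 : m • δ - n • δ = b - a := by
      rw [sub_eq_sub_iff_add_eq_add, add_comm]
      exact h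
    rw [sub_zsmul, ← sub_eq_add_neg]
    exact h2
  have hmn : m - n = 0 := hδ _ (h1 ▸ Submodule.sub_mem _ hb ha)
  have hmn' : m = n := by omega
  subst hmn'
  exact ⟨by exact add_right_cancel h, rfl⟩

lemma span_of (h : α ∈ D ∨ α = 0) : α ∈ Submodule.span ℚ D := by
  rcases h with h | h
  · exact Submodule.subset_span h
  · rw [h]; exact Submodule.zero_mem _


lemma QQ_add (h0 : (0 : V) ∉ D)
    (hli : LinearIndependent ℚ (fun x : {x : V // x ∈ S} => (x : V))) (hX : X ⊆ S)
    (hpm : ∀ β ∈ D, β ∈ PosRoots D S ∨ -β ∈ PosRoots D S)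
    {α β : V} {m n : ℤ} (hA : QQ D S X α m) (hB : QQ D S X β n)
    (hD : α + β ∈ D ∨ α + β = 0) (hne : ¬(α + β = 0 ∧ m + n = 0)) :
    QQ D S X (α + β) (m + n) := by
  rcases hA with ⟨ha1, ha2⟩ | ⟨ha1, ha2, ha3⟩ | ⟨ha1, ha2⟩ <;>
    rcases hB with ⟨hb1, hb2⟩ | ⟨hb1, hb2, hb3⟩ | ⟨hb1, hb2⟩
  · -- A, A
    have hD' : α + β ∈ D := by
      rcases hD with h | h
      · exact h
      · exfalso
        have h2 := neg_eq_of_add_eq_zero_right h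
        rw [← h2] at hb1
        exact posS_not_neg h0 hli ha1 hb1
    exact Or.inl (A_add_A h0 hli hX ha1 ha2 hb1 hD')
  · -- A, B
    have hD' : α + β ∈ D := by
      rcases hD with h | h
      · exact h
      · exfalso
        have h2 := neg_eq_of_add_eq_zero_left h
        have h3 := isZX_neg hb2
        rw [h2] at h3
        exact ha2 h3
    exact Or.inl (A_add_Z h0 hli hX hpm ha1 ha2 hb2 hD')
  · -- A, C
    have hbz := zx_of_posX hb1
    have hD' : α + β ∈ D := by
      rcases hD with h | h
      · exact h
      · exfalso
        have h2 := neg_eq_of_add_eq_zero_left h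
        have h3 := isZX_neg hbz
        rw [h2] at h3
        exact ha2 h3
    exact Or.inl (A_add_Z h0 hli hX hpm ha1 ha2 hbz hD')
  · -- B, A
    have hD' : β + α ∈ D := by
      rcases hD with h | h
      · rwa [add_comm] at h
      · exfalso
        rw [add_comm] at h
        have h2 := neg_eq_of_add_eq_zero_left h
        have h3 := isZX_neg ha2
        rw [h2] at h3
        exact hb2 h3
    have h4 := A_add_Z h0 hli hX hpm hb1 hb2 ha2 hD'
    exact Or.inl ⟨by rw [add_comm]; exact h4.1, by rw [add_comm]; exact h4.2⟩
  · -- B, B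
    exact Or.inr (Or.inl ⟨hD, isZX_add ha2 hb2, by omega⟩)
  · -- B, C
    exact Or.inr (Or.inl ⟨hD, isZX_add ha2 (zx_of_posX hb1), by omega⟩)
  · -- C, A
    have haz := zx_of_posX ha1
    have hD' : β + α ∈ D := by
      rcases hD with h | h
      · rwa [add_comm] at h
      · exfalso
        rw [add_comm] at h
        have h2 := neg_eq_of_add_eq_zero_left h
        have h3 := isZX_neg haz
        rw [h2] at h3
        exact hb2 h3
    have h4 := A_add_Z h0 hli hX hpm hb1 hb2 haz hD'
    exact Or.inl ⟨by rw [add_comm]; exact h4.1, by rw [add_comm]; exact h4.2⟩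
  · -- C, B
    exact Or.inr (Or.inl ⟨hD, isZX_add (zx_of_posX ha1) hb2, by omega⟩)
  · -- C, C
    have hD' : α + β ∈ D := hD.resolve_right (fun h => hne ⟨h, by omega⟩)
    exact Or.inr (Or.inr ⟨pos_add ha1 hb1 hD', by omega⟩)

lemma aff_neg (hsym : ∀ β ∈ D, -β ∈ D) {δ x : V}
    (h : x ∈ AffineRoots D δ) : -x ∈ AffineRoots D δ := by
  obtain ⟨hne, γ, hγ, k, hk⟩ := h
  refine ⟨neg_ne_zero.mpr hne, -γ, ?_, -k, by rw [hk, neg_add, neg_zsmul]⟩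
  rcases hγ with hγ | hγ
  · exact Or.inl (hsym _ hγ)
  · rw [Set.mem_singleton_iff] at hγ
    exact Or.inr (by rw [Set.mem_singleton_iff, hγ, neg_zero])

lemma PX_subset (h0 : (0 : V) ∉ D)
    (hli : LinearIndependent ℚ (fun x : {x : V // x ∈ S} => (x : V))) (hX : X ⊆ S)
    {δ : V} (hδ : ∀ n : ℤ, n • δ ∈ Submodule.span ℚ D → n = 0) :
    PX D δ S X ⊆ AffineRoots D δ := by
  intro x hx
  rw [memPX_iff hli hX] at hx
  obtain ⟨α, n, rfl, hQ⟩ := hx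
  have hαm := qq_mem hQ
  refine ⟨?_, α, ?_, n, rfl⟩
  · intro h
    have huq := uniq_decomp hδ (span_of hαm) (Submodule.zero_mem _) (m := n) (n := 0)
      (by simpa using h)
    obtain ⟨hα0, hn0⟩ := huq
    subst hα0
    rcases hQ with ⟨h1, _⟩ | ⟨_, _, h3⟩ | ⟨h1, _⟩
    · exact h0 h1.1
    · omega
    · exact h0 h1.1
  · rcases hαm with h | h
    · exact Or.inl h
    · exact Or.inr (by rw [Set.mem_singleton_iff, h])

end Aux

theorem PX_is_parabolic_partition
    {V : Type*} [AddCommGroup V] [Module ℚ V]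
    (D : Set V) (hfin : D.Finite) (h0 : (0 : V) ∉ D)
    (hsym : ∀ β ∈ D, -β ∈ D)
    (δ : V)
    -- δ is "independent" of the finite root system
    (hδ : ∀ n : ℤ, n • δ ∈ Submodule.span ℚ D → n = 0)
    (S : Finset V) (hS : IsBase D S) (X : Finset V) (hX : X ⊆ S) :
    PX D δ S X ⊆ AffineRoots D δ ∧
    (∀ a ∈ PX D δ S X, ∀ b ∈ PX D δ S X,
        a + b ∈ AffineRoots D δ → a + b ∈ PX D δ S X) ∧
    PX D δ S X ∪ {x | -x ∈ PX D δ S X} = AffineRoots D δ ∧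
    PX D δ S X ∩ {x | -x ∈ PX D δ S X} = ∅ := by
  classical
  obtain ⟨hSsub, hli, hpm⟩ := hS
  have hsub : PX D δ S X ⊆ AffineRoots D δ := PX_subset h0 hli hX hδ
  refine ⟨hsub, ?_, ?_, ?_⟩
  · -- additive closure
    intro a ha b hb hab
    rw [memPX_iff hli hX] at ha hb ⊢
    obtain ⟨α, m, rfl, hQa⟩ := ha
    obtain ⟨β, n, rfl, hQb⟩ := hb
    obtain ⟨hne, γ, hγ, k, hk⟩ := hab
    have hγ' : γ ∈ D ∨ γ = 0 := by
      rcases hγ with h | h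
      · exact Or.inl h
      · exact Or.inr (by rwa [Set.mem_singleton_iff] at h)
    have hkk : α + β + (m + n) • δ = γ + k • δ := by
      rw [add_zsmul, ← hk]; abel
    have huq := uniq_decomp hδ
      (Submodule.add_mem _ (span_of (qq_mem hQa)) (span_of (qq_mem hQb))) (span_of hγ') hkk
    refine ⟨α + β, m + n, by rw [add_zsmul]; abel, ?_⟩
    refine QQ_add h0 hli hX hpm hQa hQb (by rw [huq.1]; exact hγ') ?_
    rintro ⟨hz, hmn⟩
    apply hne
    have : α + m • δ + (β + n • δ) = α + β + (m + n) • δ := by rw [add_zsmul]; abel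
    rw [this, hz, hmn]
    simp
  · -- P ∪ -P = Δ
    ext x
    constructor
    · rintro (hx | hx)
      · exact hsub hx
      · have h2 := aff_neg hsym (hsub hx)
        rwa [neg_neg] at h2
    · rintro ⟨hne, γ, hγ, k, rfl⟩
      have hγ' : γ ∈ D ∨ γ = 0 := by
        rcases hγ with h | h
        · exact Or.inl h
        · exact Or.inr (by rwa [Set.mem_singleton_iff] at h)
      have hnegrep : -(γ + k • δ) = -γ + (-k) • δ := by rw [neg_add, neg_zsmul]
      rcases hγ' with hγD | hγ0
      · rcases hpm γ hγD with hP | hP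
        · by_cases hz : IsZX X γ
          · have hPX : γ ∈ PosRoots D X := pos_of_zx hli hX hP hz
            rcases lt_trichotomy k 0 with hk | hk | hk
            · right
              show -(γ + k • δ) ∈ PX D δ S X
              rw [memPX_iff hli hX]
              exact ⟨-γ, -k, hnegrep, Or.inr (Or.inl ⟨Or.inl (hsym _ hγD), isZX_neg hz, by omega⟩)⟩
            · left
              rw [memPX_iff hli hX]
              exact ⟨γ, k, rfl, Or.inr (Or.inr ⟨hPX, hk⟩)⟩
            · left
              rw [memPX_iff hli hX]
              exact ⟨γ, k, rfl, Or.inr (Or.inl ⟨Or.inl hγD, hz, hk⟩)⟩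
          · left
            rw [memPX_iff hli hX]
            exact ⟨γ, k, rfl, Or.inl ⟨hP, hz⟩⟩
        · by_cases hz : IsZX X (-γ)
          · have hPX : -γ ∈ PosRoots D X := pos_of_zx hli hX hP hz
            rcases lt_trichotomy k 0 with hk | hk | hk
            · right
              show -(γ + k • δ) ∈ PX D δ S X
              rw [memPX_iff hli hX]
              exact ⟨-γ, -k, hnegrep, Or.inr (Or.inl ⟨Or.inl (hsym _ hγD), hz, by omega⟩)⟩
            · right
              show -(γ + k • δ) ∈ PX D δ S X
              rw [memPX_iff hli hX]
              exact ⟨-γ, -k, hnegrep, Or.inr (Or.inr ⟨hPX, by omega⟩)⟩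
            · left
              rw [memPX_iff hli hX]
              refine ⟨γ, k, rfl, Or.inr (Or.inl ⟨Or.inl hγD, ?_, hk⟩)⟩
              have h3 := isZX_neg hz
              rwa [neg_neg] at h3
          · right
            show -(γ + k • δ) ∈ PX D δ S X
            rw [memPX_iff hli hX]
            exact ⟨-γ, -k, hnegrep, Or.inl ⟨hP, hz⟩⟩
      · subst hγ0
        have hk0 : k ≠ 0 := by
          rintro rfl
          simp at hne
        rcases lt_or_gt_of_ne hk0 with hk | hk
        · right
          show -(0 + k • δ) ∈ PX D δ S X
          rw [memPX_iff hli hX]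
          exact ⟨0, -k, by rw [hnegrep, neg_zero], Or.inr (Or.inl ⟨Or.inr rfl, isZX_zero X, by omega⟩)⟩
        · left
          rw [memPX_iff hli hX]
          exact ⟨0, k, rfl, Or.inr (Or.inl ⟨Or.inr rfl, isZX_zero X, hk⟩)⟩
  · -- disjointness
    rw [Set.eq_empty_iff_forall_notMem]
    rintro x ⟨hx, hnx⟩
    simp only [Set.mem_setOf_eq] at hnx
    rw [memPX_iff hli hX] at hx hnx
    obtain ⟨α, m, hx1, hQ⟩ := hx
    obtain ⟨β, k, hx2, hQ'⟩ := hnx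
    have hx3 : x = -β + (-k) • δ := by
      rw [← neg_neg x, hx2, neg_add, neg_zsmul]
    have huq := uniq_decomp hδ (span_of (qq_mem hQ))
      (Submodule.neg_mem _ (span_of (qq_mem hQ'))) (hx1.symm.trans hx3)
    have hβ : β = -α := by rw [huq.1, neg_neg]
    have hkm : k = -m := by have := huq.2; omega
    subst hβ hkm
    rcases hQ with ⟨ha1, ha2⟩ | ⟨ha1, ha2, ha3⟩ | ⟨ha1, ha2⟩ <;>
      rcases hQ' with ⟨hb1, hb2⟩ | ⟨hb1, hb2, hb3⟩ | ⟨hb1, hb2⟩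
    · exact posS_not_neg h0 hli ha1 hb1
    · refine ha2 ?_
      have h3 := isZX_neg hb2
      rwa [neg_neg] at h3
    · refine ha2 ?_
      have h3 := isZX_neg (zx_of_posX hb1)
      rwa [neg_neg] at h3
    · exact hb2 (isZX_neg ha2)
    · omega
    · omega
    · exact hb2 (isZX_neg (zx_of_posX ha1))
    · omega
    · exact posS_not_neg h0 hli (posX_subset_posS hX ha1) (posX_subset_posS hX hb1)
end

section
/- Let P be a parabolic set of the affine root system Δ such that both δ ∈ P and −δ ∈ P. Then there exists a system of simple roots Σ̇ of Δ̇ and a subset S ⊆ Σ̇ such that P = P(Σ̇, ∅) ∪ ⟨{−S} ∪ {±δ}⟩. -/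
/-- The natural parabolic partition P(Σ̇, ∅). -/
def Pnat {V : Type*} [AddCommGroup V] (D : Set V) (δ : V) (S : Finset V) : Set V :=
  {x | ∃ α ∈ PosRoots D S, ∃ n : ℤ, x = α + n • δ} ∪
  {x | ∃ k : ℤ, 0 < k ∧ x = k • δ}

/-- ⟨{−S} ∪ {±δ}⟩: affine roots which are nonnegative integer combinations of the
negatives of elements of S and of ±δ (combinations of ±δ give arbitrary mδ). -/
def NegConeDelta {V : Type*} [AddCommGroup V] (D : Set V) (δ : V) (S : Finset V) : Set V :=
  {x | x ∈ AffineRoots D δ ∧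
    ∃ c : V → ℕ, ∃ m : ℤ, x = (∑ α ∈ S, c α • (-α)) + m • δ}

section helpers
variable {V : Type*} [AddCommGroup V] [Module ℚ V]

lemma sum_coeff_unique (S : Finset V)
    (li : LinearIndependent ℚ (fun x : {x : V // x ∈ S} => (x : V)))
    (a b : V → ℕ) (h : ∑ β ∈ S, a β • β = ∑ β ∈ S, b β • β) :
    ∀ β ∈ S, a β = b β := by
  have key : ∀ x : {x : V // x ∈ S}, ((a x : ℚ) - (b x : ℚ)) = 0 := by
    apply Fintype.linearIndependent_iff.mp li
    have h1 : ∑ x : {x : V // x ∈ S}, ((a (x:V) : ℚ) - (b (x:V) : ℚ)) • (x : V)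
        = ∑ β ∈ S, ((a β : ℚ) - (b β : ℚ)) • β :=
      Finset.sum_coe_sort S (fun β => ((a β : ℚ) - (b β : ℚ)) • β)
    rw [h1]
    have h2 : ∀ β ∈ S, ((a β : ℚ) - (b β : ℚ)) • β = a β • β - b β • β := by
      intro β _
      rw [sub_smul, Nat.cast_smul_eq_nsmul, Nat.cast_smul_eq_nsmul]
    rw [Finset.sum_congr rfl h2, Finset.sum_sub_distrib, h, sub_self]
  intro β hβ
  have h3 := key ⟨β, hβ⟩
  have h4 : (a β : ℚ) = b β := by linarith [sub_eq_zero.mp h3]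
  exact_mod_cast h4

open Classical in
lemma mem_posroots_of_mem (D : Set V) (S : Finset V) {α : V} (hα : α ∈ S)
    (hαD : α ∈ D) : α ∈ PosRoots D S := by
  refine ⟨hαD, fun β => if β = α then 1 else 0, ?_⟩
  have h1 : ∀ β ∈ S, (if β = α then (1:ℕ) else 0) • β = if β = α then β else 0 := by
    intro β _; split <;> simp
  rw [Finset.sum_congr rfl h1, Finset.sum_ite_eq' S α (fun β => β), if_pos hα]

lemma coeff_step (S : Finset V)
    (li : LinearIndependent ℚ (fun x : {x : V // x ∈ S} => (x : V)))
    {α : V} (hα : α ∈ S) (c c' : V → ℕ)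
    (h : ∑ β ∈ S, c β • β = α + ∑ β ∈ S, c' β • β) :
    (∀ β ∈ S, β ≠ α → c β = c' β) ∧ c α = c' α + 1 ∧
      ∑ β ∈ S, c β = (∑ β ∈ S, c' β) + 1 := by
  classical
  have key : ∀ β ∈ S, c β = c' β + if β = α then 1 else 0 := by
    apply sum_coeff_unique S li
    rw [h]
    have h1 : ∀ β ∈ S, (c' β + if β = α then 1 else 0) • β
        = c' β • β + (if β = α then β else 0) := by
      intro β _; split <;> simp [add_smul]
    rw [Finset.sum_congr rfl h1, Finset.sum_add_distrib,
      Finset.sum_ite_eq' S α (fun β => β), if_pos hα, add_comm]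
  have hne : ∀ β ∈ S, β ≠ α → c β = c' β := by
    intro β hβ hne; have := key β hβ; simpa [hne] using this
  have hself : c α = c' α + 1 := by have := key α hα; simpa using this
  refine ⟨hne, hself, ?_⟩
  have e1 : ∑ β ∈ S, c β = c α + ∑ β ∈ S.erase α, c β := (Finset.add_sum_erase S c hα).symm
  have e2 : ∑ β ∈ S, c' β = c' α + ∑ β ∈ S.erase α, c' β := (Finset.add_sum_erase S c' hα).symm
  have e3 : ∑ β ∈ S.erase α, c β = ∑ β ∈ S.erase α, c' β :=
    Finset.sum_congr rfl (fun β hβ =>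
      hne β (Finset.mem_of_mem_erase hβ) (Finset.ne_of_mem_erase hβ))
  omega

lemma neg_not_posroots (D : Set V) (h0 : (0:V) ∉ D) (S : Finset V)
    (li : LinearIndependent ℚ (fun x : {x : V // x ∈ S} => (x : V)))
    {γ : V} (hγ : γ ∈ PosRoots D S) : -γ ∉ PosRoots D S := by
  rintro ⟨-, b, hb⟩
  obtain ⟨hγD, a, ha⟩ := hγ
  have key := sum_coeff_unique S li (fun β => a β + b β) (fun _ => 0) (by
    have h1 : ∀ β ∈ S, (a β + b β) • β = a β • β + b β • β := by
      intro β _; rw [add_smul]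
    rw [Finset.sum_congr rfl h1, Finset.sum_add_distrib, ← ha, ← hb]
    simp)
  have hγ0 : γ = 0 := by
    rw [ha]
    refine Finset.sum_eq_zero fun β hβ => ?_
    have h2 : a β = 0 := by have := key β hβ; simp at this; omega
    simp [h2]
  exact h0 (hγ0 ▸ hγD)

end helpers

theorem parabolic_set_with_pm_delta
    {V : Type*} [AddCommGroup V] [Module ℚ V]
    (D : Set V) (hfin : D.Finite) (h0 : (0 : V) ∉ D)
    (hsym : ∀ β ∈ D, -β ∈ D)
    (δ : V) (hδind : ∀ n : ℤ, n • δ ∈ Submodule.span ℚ D → n = 0)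
    (hbase : ∃ S : Finset V, IsBase D S)
    (hrefl : ∀ S : Finset V, IsBase D S → ∀ α ∈ S, ∃ S' : Finset V, IsBase D S' ∧
      PosRoots D S' =
        (PosRoots D S \ {α, (2 : ℕ) • α}) ∪ ({-α, -((2 : ℕ) • α)} ∩ D))
    (hdecomp : ∀ S : Finset V, IsBase D S → ∀ γ ∈ PosRoots D S, γ ∉ (S : Set V) →
      ∃ α ∈ S, ∃ γ' ∈ PosRoots D S, γ = α + γ')
    (P : Set V) (hPsub : P ⊆ AffineRoots D δ)
    (hadd : ∀ a ∈ P, ∀ b ∈ P, a + b ∈ AffineRoots D δ → a + b ∈ P)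
    (hcover : P ∪ {x | -x ∈ P} = AffineRoots D δ)
    (hδP : δ ∈ P) (hδP' : -δ ∈ P) :
    ∃ S : Finset V, IsBase D S ∧ ∃ R : Finset V, R ⊆ S ∧
      P = Pnat D δ S ∪ NegConeDelta D δ R := by
  classical
  -- basic facts about δ
  have hδn0 : ∀ n : ℤ, n • δ = 0 → n = 0 := by
    intro n hn
    exact hδind n (hn ▸ Submodule.zero_mem _)
  have haff : ∀ α ∈ D, ∀ n : ℤ, α + n • δ ∈ AffineRoots D δ := by
    intro α hα n
    refine ⟨?_, α, Or.inl hα, n, rfl⟩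
    intro hzero
    have h1 : α = (-n) • δ := by
      rw [neg_smul]
      exact eq_neg_of_add_eq_zero_left hzero
    have h2 : (-n : ℤ) = 0 := hδind _ (h1 ▸ Submodule.subset_span hα)
    have h3 : α = 0 := by rw [h1, h2, zero_smul]
    exact h0 (h3 ▸ hα)
  have hkδaff : ∀ k : ℤ, k ≠ 0 → k • δ ∈ AffineRoots D δ := by
    intro k hk
    refine ⟨fun h => hk (hδn0 k h), 0, Or.inr rfl, k, (zero_add _).symm⟩
  -- all nonzero multiples of δ are in P
  have hkδP : ∀ k : ℤ, k ≠ 0 → k • δ ∈ P := by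
    have pos : ∀ j : ℕ, ((j:ℤ)+1) • δ ∈ P := by
      intro j
      induction j with
      | zero => simpa using hδP
      | succ j ih =>
          have heq : ((j:ℤ)+1) • δ + δ = (((j:ℤ)+1)+1) • δ := by
            rw [add_smul ((j:ℤ)+1) 1, one_smul]
          have h1 := hadd _ ih δ hδP (by rw [heq]; exact hkδaff _ (by omega))
          rw [heq] at h1
          have hcast : (((j+1:ℕ)):ℤ) + 1 = ((j:ℤ)+1)+1 := by push_cast; ring
          rw [hcast]
          exact h1
    have neg : ∀ j : ℕ, (-(j:ℤ)-1) • δ ∈ P := by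
      intro j
      induction j with
      | zero => simpa using hδP'
      | succ j ih =>
          have heq : (-(j:ℤ)-1) • δ + (-δ) = (-(j:ℤ)-1-1) • δ := by
            rw [sub_smul (-(j:ℤ)-1) 1, one_smul]; abel
          have h1 := hadd _ ih (-δ) hδP' (by rw [heq]; exact hkδaff _ (by omega))
          rw [heq] at h1
          have hcast : -((j+1:ℕ):ℤ) - 1 = -(j:ℤ)-1-1 := by push_cast; ring
          rw [hcast]
          exact h1
    intro k hk
    rcases lt_or_gt_of_ne hk with h | h
    · obtain ⟨j, hj⟩ : ∃ j : ℕ, k = -(j:ℤ)-1 := ⟨(-k-1).toNat, by omega⟩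
      rw [hj]; exact neg j
    · obtain ⟨j, hj⟩ : ∃ j : ℕ, k = (j:ℤ)+1 := ⟨(k-1).toNat, by omega⟩
      rw [hj]; exact pos j
  -- shift lemma
  have hshift : ∀ α ∈ D, ∀ n m : ℤ, α + n • δ ∈ P → α + m • δ ∈ P := by
    intro α hα n m hmem
    have up : ∀ j : ℤ, α + j • δ ∈ P → α + (j+1) • δ ∈ P := by
      intro j hj
      have heq : (α + j • δ) + δ = α + (j+1) • δ := by
        rw [add_smul, one_smul]; abel
      have h1 := hadd _ hj δ hδP (by rw [heq]; exact haff α hα _)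
      rwa [heq] at h1
    have down : ∀ j : ℤ, α + j • δ ∈ P → α + (j-1) • δ ∈ P := by
      intro j hj
      have heq : (α + j • δ) + (-δ) = α + (j-1) • δ := by
        rw [sub_smul, one_smul]; abel
      have h1 := hadd _ hj (-δ) hδP' (by rw [heq]; exact haff α hα _)
      rwa [heq] at h1
    have key : ∀ k : ℤ, α + (n + k) • δ ∈ P := by
      intro k
      induction k using Int.induction_on with
      | zero => simpa using hmem
      | succ i ih =>
          have h1 := up (n + i) ih
          have heq : (n + (i:ℤ)) + 1 = n + ((i:ℤ)+1) := by ring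
          rwa [heq] at h1
      | pred i ih =>
          have h1 := down (n + (-i)) ih
          have heq : (n + (-(i:ℤ))) - 1 = n + (-(i:ℤ) - 1) := by ring
          rwa [heq] at h1
    have h2 := key (m - n)
    have heq : n + (m - n) = m := by ring
    rwa [heq] at h2
  -- the finite part of P
  set Pdot : Set V := {α | α ∈ D ∧ α ∈ P} with hPdotdef
  have hmemaff : ∀ β ∈ D, β ∈ AffineRoots D δ := by
    intro β hβ
    have := haff β hβ 0
    simpa using this
  have hPdotcover : ∀ β ∈ D, β ∈ Pdot ∨ -β ∈ Pdot := by
    intro β hβ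
    have h1 : β ∈ P ∪ {x | -x ∈ P} := hcover ▸ hmemaff β hβ
    rcases h1 with h | h
    · exact Or.inl ⟨hβ, h⟩
    · exact Or.inr ⟨hsym β hβ, h⟩
  have hPdotadd : ∀ a ∈ Pdot, ∀ b ∈ Pdot, a + b ∈ D → a + b ∈ Pdot := by
    intro a ha b hb hab
    exact ⟨hab, hadd a ha.2 b hb.2 (hmemaff _ hab)⟩
  -- characterization of P by Pdot
  have hPchar : P = {x | ∃ α ∈ Pdot, ∃ n : ℤ, x = α + n • δ}
      ∪ {x | ∃ k : ℤ, k ≠ 0 ∧ x = k • δ} := by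
    ext x
    constructor
    · intro hx
      obtain ⟨hx0, α, hα, n, hxeq⟩ := hPsub hx
      rcases hα with hα | hα
      · left
        refine ⟨α, ⟨hα, ?_⟩, n, hxeq⟩
        have h1 : α + n • δ ∈ P := hxeq ▸ hx
        have h2 := hshift α hα n 0 h1
        simpa using h2
      · right
        rw [Set.mem_singleton_iff] at hα
        subst hα
        refine ⟨n, ?_, by simpa using hxeq⟩
        intro hn
        apply hx0
        rw [hxeq, hn, zero_smul, zero_add]
    · rintro (⟨α, hα, n, hxeq⟩ | ⟨k, hk, hxeq⟩)
      · have h1 : α + (0:ℤ) • δ ∈ P := by simpa using hα.2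
        exact hxeq ▸ hshift α hα.1 0 n h1
      · exact hxeq ▸ hkδP k hk
  -- choose a base maximizing |Pdot ∩ PosRoots|
  set T : Set ℕ := {n | ∃ S : Finset V, IsBase D S ∧ n = (Pdot ∩ PosRoots D S).ncard}
    with hTdef
  have hTne : T.Nonempty := by
    obtain ⟨S, hS⟩ := hbase
    exact ⟨_, S, hS, rfl⟩
  have hTbdd : BddAbove T := by
    refine ⟨D.ncard, ?_⟩
    rintro n ⟨S, hS, rfl⟩
    exact Set.ncard_le_ncard (fun x hx => hx.1.1) hfin
  obtain ⟨S, hS, hScard⟩ := Nat.sSup_mem hTne hTbdd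
  -- all simple roots lie in Pdot
  have hsimple : ∀ α ∈ S, α ∈ Pdot := by
    intro α hαS
    by_contra hαnP
    have hαD : α ∈ D := hS.1 hαS
    have hnegα : -α ∈ Pdot := (hPdotcover α hαD).resolve_left hαnP
    have h2α : (2:ℕ) • α ∉ Pdot := by
      intro h
      apply hαnP
      have heq : (2:ℕ) • α + -α = α := by rw [two_smul]; abel
      have h1 := hPdotadd _ h _ hnegα (by rw [heq]; exact hαD)
      rwa [heq] at h1
    obtain ⟨S', hS', heq⟩ := hrefl S hS α hαS
    have hsub : Pdot ∩ PosRoots D S ⊆ Pdot ∩ PosRoots D S' := by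
      rintro x ⟨hxP, hxPos⟩
      refine ⟨hxP, ?_⟩
      rw [heq]
      left
      refine ⟨hxPos, ?_⟩
      intro hmem
      rcases hmem with h | h
      · exact hαnP (h ▸ hxP)
      · rw [Set.mem_singleton_iff] at h
        exact h2α (h ▸ hxP)
    have hαpos : α ∈ PosRoots D S := mem_posroots_of_mem D S hαS hαD
    have hnegnot : -α ∉ PosRoots D S := neg_not_posroots D h0 S hS.2.1 hαpos
    have hmem' : -α ∈ Pdot ∩ PosRoots D S' := by
      refine ⟨hnegα, ?_⟩
      rw [heq]
      right
      exact ⟨Or.inl rfl, hsym α hαD⟩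
    have hss : Pdot ∩ PosRoots D S ⊂ Pdot ∩ PosRoots D S' := by
      refine ⟨hsub, fun hback => ?_⟩
      exact hnegnot (hback hmem').2
    have hfin' : (Pdot ∩ PosRoots D S').Finite :=
      hfin.subset (fun x hx => hx.1.1)
    have hlt : (Pdot ∩ PosRoots D S).ncard < (Pdot ∩ PosRoots D S').ncard :=
      Set.ncard_lt_ncard hss hfin'
    have hmemT : (Pdot ∩ PosRoots D S').ncard ∈ T := ⟨S', hS', rfl⟩
    have := le_csSup hTbdd hmemT
    omega
  -- all positive roots lie in Pdot
  have hposkey : ∀ n : ℕ, ∀ γ, γ ∈ PosRoots D S →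
      ∀ c : V → ℕ, γ = ∑ β ∈ S, c β • β → ∑ β ∈ S, c β = n → γ ∈ Pdot := by
    intro n
    induction n using Nat.strong_induction_on with
    | _ n ih =>
      intro γ hγ c hc hn
      by_cases hγS : γ ∈ (S : Set V)
      · exact hsimple γ hγS
      · obtain ⟨α, hα, γ', hγ', hdec⟩ := hdecomp S hS γ hγ hγS
        obtain ⟨hγ'D, c', hc'⟩ := hγ'
        have hstep := coeff_step S hS.2.1 hα c c' (by rw [← hc, hdec, hc'])
        have hγ'P := ih (∑ β ∈ S, c' β) (by omega) γ' ⟨hγ'D, c', hc'⟩ c' hc' rfl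
        have h1 := hPdotadd α (hsimple α hα) γ' hγ'P (by rw [← hdec]; exact hγ.1)
        rwa [← hdec] at h1
  have hpossub : PosRoots D S ⊆ Pdot := by
    intro γ hγ
    obtain ⟨hγD, c, hc⟩ := hγ
    exact hposkey (∑ β ∈ S, c β) γ ⟨hγD, c, hc⟩ c hc rfl
  -- the subset R
  set R : Finset V := S.filter (fun α => -α ∈ Pdot) with hRdef
  have hRS : R ⊆ S := Finset.filter_subset _ S
  have hRmem : ∀ α, α ∈ R ↔ α ∈ S ∧ -α ∈ Pdot := by
    intro α; rw [hRdef, Finset.mem_filter]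
  -- positive roots supported on R have their negative in Pdot
  have hkey2 : ∀ n : ℕ, ∀ γ, γ ∈ PosRoots D S →
      ∀ c : V → ℕ, γ = ∑ β ∈ S, c β • β → ∑ β ∈ S, c β = n →
      (∀ β ∈ S, β ∉ R → c β = 0) → -γ ∈ Pdot := by
    intro n
    induction n using Nat.strong_induction_on with
    | _ n ih =>
      intro γ hγ c hc hn hsupp
      by_cases hγS : γ ∈ (S : Set V)
      · have hstep := coeff_step S hS.2.1 hγS c (fun _ => 0)
          (by rw [← hc]; simp)
        have hγR : γ ∈ R := by
          by_contra hγR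
          have := hsupp γ hγS hγR
          omega
        exact ((hRmem γ).mp hγR).2
      · obtain ⟨α, hα, γ', hγ', hdec⟩ := hdecomp S hS γ hγ hγS
        obtain ⟨hγ'D, c', hc'⟩ := hγ'
        have hstep := coeff_step S hS.2.1 hα c c' (by rw [← hc, hdec, hc'])
        have hαR : α ∈ R := by
          by_contra hαR
          have := hsupp α hα hαR
          omega
        have hsupp' : ∀ β ∈ S, β ∉ R → c' β = 0 := by
          intro β hβ hβR
          have hne : β ≠ α := fun h => hβR (h ▸ hαR)
          rw [← hstep.1 β hβ hne]
          exact hsupp β hβ hβR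
        have hγ'neg := ih (∑ β ∈ S, c' β) (by omega) γ' ⟨hγ'D, c', hc'⟩ c' hc' rfl hsupp'
        have heqq : -α + -γ' = -γ := by rw [hdec]; abel
        have h1 := hPdotadd (-α) ((hRmem α).mp hαR).2 (-γ') hγ'neg
          (by rw [heqq]; exact hsym γ hγ.1)
        rwa [heqq] at h1
  -- positive roots whose negative is in Pdot are supported on R
  have hkey3 : ∀ n : ℕ, ∀ γ, γ ∈ PosRoots D S → -γ ∈ Pdot →
      ∀ c : V → ℕ, γ = ∑ β ∈ S, c β • β → ∑ β ∈ S, c β = n →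
      ∀ β ∈ S, c β ≠ 0 → β ∈ R := by
    intro n
    induction n using Nat.strong_induction_on with
    | _ n ih =>
      intro γ hγ hγneg c hc hn
      by_cases hγS : γ ∈ (S : Set V)
      · have hstep := coeff_step S hS.2.1 hγS c (fun _ => 0)
          (by rw [← hc]; simp)
        intro β hβ hcβ
        have hβγ : β = γ := by
          by_contra hne
          exact hcβ (hstep.1 β hβ hne)
        rw [hβγ]
        exact (hRmem γ).mpr ⟨hγS, hγneg⟩
      · obtain ⟨α, hα, γ', hγ', hdec⟩ := hdecomp S hS γ hγ hγS
        obtain ⟨hγ'D, c', hc'⟩ := hγ'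
        have hstep := coeff_step S hS.2.1 hα c c' (by rw [← hc, hdec, hc'])
        have hγ'neg : -γ' ∈ Pdot := by
          have heqq : α + -γ = -γ' := by rw [hdec]; abel
          have h1 := hPdotadd α (hsimple α hα) (-γ) hγneg
            (by rw [heqq]; exact hsym γ' hγ'D)
          rwa [heqq] at h1
        have hαR : α ∈ R := by
          have heqq : γ' + -γ = -α := by rw [hdec]; abel
          have h1 := hPdotadd γ' (hpossub ⟨hγ'D, c', hc'⟩) (-γ) hγneg
            (by rw [heqq]; exact hsym α (hS.1 hα))
          rw [heqq] at h1
          exact (hRmem α).mpr ⟨hα, h1⟩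
        have hIH := ih (∑ β ∈ S, c' β) (by omega) γ' ⟨hγ'D, c', hc'⟩ hγ'neg c' hc' rfl
        intro β hβ hcβ
        by_cases hβα : β = α
        · exact hβα ▸ hαR
        · refine hIH β hβ ?_
          rw [← hstep.1 β hβ hβα]
          exact hcβ
  -- elements of D that are R-negative-combinations lie in Pdot
  have hNegPdot : ∀ β ∈ D, ∀ c : V → ℕ, β = ∑ α ∈ R, c α • (-α) → β ∈ Pdot := by
    intro β hβ c hc
    set c' : V → ℕ := fun α => if α ∈ R then c α else 0 with hc'def
    have hsum : -β = ∑ α ∈ S, c' α • α := by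
      rw [hc]
      have e1 : ∑ α ∈ R, c α • (-α) = -(∑ α ∈ R, c α • α) := by
        rw [← Finset.sum_neg_distrib]
        exact Finset.sum_congr rfl (fun α _ => (smul_neg _ _))
      rw [e1, neg_neg]
      have e2 : ∑ α ∈ R, c α • α = ∑ α ∈ R, c' α • α :=
        Finset.sum_congr rfl (fun α hα => by simp [hc'def, hα])
      rw [e2]
      exact Finset.sum_subset hRS (fun x _ hx => by simp [hc'def, hx])
    have hnegpos : -β ∈ PosRoots D S := ⟨hsym β hβ, c', hsum⟩
    have := hkey2 (∑ β ∈ S, c' β) (-β) hnegpos c' hsum rfl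
      (fun β hβ hβR => by simp [hc'def, hβR])
    simpa using this
  -- elements of Pdot decompose
  have hPdotsub : ∀ β ∈ Pdot, β ∈ PosRoots D S ∨
      (β ∈ D ∧ ∃ c : V → ℕ, β = ∑ α ∈ R, c α • (-α)) := by
    intro β hβ
    rcases hS.2.2 β hβ.1 with h | h
    · exact Or.inl h
    · right
      refine ⟨hβ.1, ?_⟩
      obtain ⟨hnD, c, hc⟩ := h
      have hsupp : ∀ α ∈ S, c α ≠ 0 → α ∈ R :=
        hkey3 (∑ β ∈ S, c β) (-β) ⟨hnD, c, hc⟩ (by rw [neg_neg]; exact hβ) c hc rfl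
      refine ⟨c, ?_⟩
      have e1 : ∑ α ∈ R, c α • (-α) = -(∑ α ∈ R, c α • α) := by
        rw [← Finset.sum_neg_distrib]
        exact Finset.sum_congr rfl (fun α _ => (smul_neg _ _))
      rw [e1]
      have e2 : ∑ α ∈ R, c α • α = ∑ α ∈ S, c α • α :=
        Finset.sum_subset hRS (fun x hx hxR => by
          have : c x = 0 := by
            by_contra hne
            exact hxR (hsupp x hx hne)
          simp [this])
      rw [e2, ← hc, neg_neg]
  -- final assembly
  refine ⟨S, hS, R, hRS, ?_⟩
  ext x
  constructor
  · intro hx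
    rw [hPchar] at hx
    rcases hx with ⟨α, hα, n, hxeq⟩ | ⟨k, hk, hxeq⟩
    · rcases hPdotsub α hα with h | ⟨hαD, c, hc⟩
      · exact Or.inl (Or.inl ⟨α, h, n, hxeq⟩)
      · refine Or.inr ⟨?_, c, n, by rw [hxeq, hc]⟩
        rw [hxeq]
        exact haff α hα.1 n
    · rcases lt_or_gt_of_ne hk with h | h
      · refine Or.inr ⟨hxeq ▸ hkδaff k hk, fun _ => 0, k, ?_⟩
        simp [hxeq]
      · exact Or.inl (Or.inr ⟨k, h, hxeq⟩)
  · rintro (hx | hx)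
    · rw [hPchar]
      rcases hx with ⟨α, hα, n, hxeq⟩ | ⟨k, hk, hxeq⟩
      · exact Or.inl ⟨α, hpossub hα, n, hxeq⟩
      · exact Or.inr ⟨k, by omega, hxeq⟩
    · obtain ⟨⟨hx0, β, hβ, n, hxβ⟩, c, m, hxeq⟩ := hx
      set s : V := ∑ α ∈ R, c α • (-α) with hsdef
      have hsspan : s ∈ Submodule.span ℚ D := by
        refine Submodule.sum_mem _ (fun α hα => ?_)
        rw [← Nat.cast_smul_eq_nsmul ℚ]
        exact Submodule.smul_mem _ _
          (Submodule.neg_mem _ (Submodule.subset_span (hS.1 (hRS hα))))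
      have hβspan : β ∈ Submodule.span ℚ D := by
        rcases hβ with h | h
        · exact Submodule.subset_span h
        · rw [Set.mem_singleton_iff] at h
          rw [h]; exact Submodule.zero_mem _
      have heq2 : s + m • δ = β + n • δ := by rw [← hxeq, ← hxβ]
      have h5 : (n - m) • δ = s - β := by
        rw [sub_smul, sub_eq_sub_iff_add_eq_add, add_comm (n • δ) β, ← heq2]
      have hnm : n = m := by
        have := hδind (n - m) (h5 ▸ Submodule.sub_mem _ hsspan hβspan)
        omega
      have hsβ : s = β := by
        have h6 : s - β = 0 := by
          rw [← h5, hnm, sub_self, zero_smul]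
        exact sub_eq_zero.mp h6
      rw [hPchar]
      rcases hβ with hβD | hβ0
      · left
        exact ⟨β, hNegPdot β hβD c (by rw [← hsβ]), n, hxβ⟩
      · rw [Set.mem_singleton_iff] at hβ0
        right
        refine ⟨n, ?_, by rw [hxβ, hβ0, zero_add]⟩
        intro hn
        apply hx0
        rw [hxβ, hβ0, hn, zero_smul, add_zero]
end

section
/- With notation as above, for distinct integers ℓ₁,…,ℓ_n: x_α(−ℓ_n)···x_α(−ℓ₁)·x_{−α}(ℓ₁)···x_{−α}(ℓ_n)·1_ζ = ∏_{i=1}^n (ζ(h_α) − ℓ_i (x_α|x_{−α}) ζ(K)) · 1_ζ in the simple natural highest weight module V(ζ) over affine sl(1,1). -/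
/-!
STATEMENT 11: In the simple natural highest weight module V(ζ) over affine sl(1,1),
for distinct integers ℓ₁,…,ℓ_n:
x_α(−ℓ_n)···x_α(−ℓ₁)·x_{−α}(ℓ₁)···x_{−α}(ℓ_n)·1_ζ
  = ∏ᵢ (ζ(h_α) − ℓᵢ (x_α|x_{−α}) ζ(K)) · 1_ζ.
Setup as in Statement 10 (c = ζ(h_α), k = ζ(K), b = (x_α|x_{−α})).
-/

theorem affine_sl11_pairing_formula
    {W : Type*} [AddCommGroup W] [Module ℂ W]
    (xa xm : ℤ → Module.End ℂ W) (c k b : ℂ) (v : W)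
    (hxa : ∀ m m' : ℤ, xa m * xa m' = -(xa m' * xa m))
    (hxm : ∀ l l' : ℤ, xm l * xm l' = -(xm l' * xm l))
    (hbr : ∀ m l : ℤ, xa m * xm l + xm l * xa m =
      if m + l = 0 then (c + (m : ℂ) * b * k) • (1 : Module.End ℂ W) else 0)
    (hv : ∀ m : ℤ, xa m v = 0)
    (l : List ℤ) (hl : l.Nodup) :
    ((l.reverse.map (fun t => xa (-t))).prod * (l.map xm).prod) v =
      ((l.map (fun t : ℤ => c - (t : ℂ) * b * k)).prod) • v := by
  -- auxiliary: xa m kills (rest.map xm).prod v if m + s ≠ 0 for all s in rest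
  have aux : ∀ (rest : List ℤ) (m : ℤ), (∀ s ∈ rest, m + s ≠ 0) →
      xa m ((rest.map xm).prod v) = 0 := by
    intro rest
    induction rest with
    | nil => intro m _; simpa using hv m
    | cons s rest ih =>
        intro m hm
        have hcomm : xa m * xm s = -(xm s * xa m) := by
          have := hbr m s
          rw [if_neg (hm s (List.mem_cons_self))] at this
          linear_combination (norm := module) this
        have : (xa m * (xm s * (rest.map xm).prod)) v
            = (-(xm s * (xa m * (rest.map xm).prod))) v := by
          rw [← mul_assoc, hcomm]
          simp [mul_assoc]
        simp only [List.map_cons, List.prod_cons, Module.End.mul_apply] at this ⊢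
        rw [this]
        simp only [LinearMap.neg_apply, Module.End.mul_apply]
        rw [ih m (fun s hs => hm s (List.mem_cons_of_mem _ hs))]
        simp
  induction l with
  | nil => simp
  | cons t rest ih =>
      have ht : t ∉ rest := (List.nodup_cons.mp hl).1
      have hrest : rest.Nodup := (List.nodup_cons.mp hl).2
      have key : xa (-t) ((xm t) ((rest.map xm).prod v))
          = (c - (t : ℂ) * b * k) • ((rest.map xm).prod v) := by
        have hb := hbr (-t) t
        rw [if_pos (by ring)] at hb
        have happ := congrArg (fun f : Module.End ℂ W => f ((rest.map xm).prod v)) hb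
        simp only [LinearMap.add_apply, Module.End.mul_apply, LinearMap.smul_apply,
          Module.End.one_apply] at happ
        have hz : xa (-t) ((rest.map xm).prod v) = 0 := by
          apply aux
          intro s hs hss
          exact ht (by rwa [show s = t by omega] at hs)
        rw [hz, map_zero, add_zero] at happ
        rw [happ]
        push_cast
        module
      simp only [List.reverse_cons, List.map_append, List.map_cons, List.prod_cons,
        List.map_nil, List.prod_append, List.prod_nil, mul_one, Module.End.mul_apply] at ih ⊢
      rw [key, map_smul, ih hrest, smul_smul]
end

section
/- Let V(ζ) be the simple natural highest weight module over affine sl(1,1) and let ℓ ∈ Z, n ≥ 0. The weight space V(ζ)_{ζ − nα + ℓδ} is zero if and only if for every tuple (ℓ₁,…,ℓ_n) of pairwise distinct integers with ℓ₁+⋯+ℓ_n = ℓ, one has ∏_{i=1}^n (ζ(h_α) − ℓ_i(x_α|x_{−α})ζ(K)) = 0. -/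
/-!
STATEMENT 13: In the simple natural highest weight module V(ζ) over affine sl(1,1),
for ℓ ∈ ℤ and n ≥ 0, the weight space V(ζ)_{ζ−nα+ℓδ} is zero if and only if for
every tuple (ℓ₁,…,ℓ_n) of pairwise distinct integers with ℓ₁+⋯+ℓ_n = ℓ one has
∏ᵢ (ζ(h_α) − ℓᵢ(x_α|x_{−α})ζ(K)) = 0.

The weight space is spanned by the vectors x_{−α}(ℓ₁)···x_{−α}(ℓ_n)·1_ζ with the
ℓᵢ pairwise distinct and summing to ℓ (by the odd PBW theorem).  We encode V(ζ)
by its operators: `xa`, `xm` (actions of x_{±α}(m)), `d` the degree operator,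
with c = ζ(h_α), k = ζ(K), b = (x_α|x_{−α}); simplicity is the statement that
every subspace invariant under all operators is 0 or everything; 1_ζ = v ≠ 0.
-/


namespace AffSL11Aux

variable {W : Type*} [AddCommGroup W] [Module ℂ W]

lemma sq_zero (xm : ℤ → Module.End ℂ W)
    (hxm : ∀ l l' : ℤ, xm l * xm l' = -(xm l' * xm l)) (t : ℤ) :
    xm t * xm t = 0 := by
  have h := hxm t t
  have h2 : (2 : ℂ) • (xm t * xm t) = 0 := by
    rw [two_smul]
    nth_rewrite 1 [h]
    exact neg_add_cancel _
  rcases smul_eq_zero.mp h2 with h' | h'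
  · exact absurd h' two_ne_zero
  · exact h'

lemma mul_prod_mem (xm : ℤ → Module.End ℂ W)
    (hxm : ∀ l l' : ℤ, xm l * xm l' = -(xm l' * xm l)) :
    ∀ (l : List ℤ) (m : ℤ), m ∈ l → xm m * (l.map xm).prod = 0 := by
  intro l
  induction l with
  | nil => intro m hm; simp at hm
  | cons t l ih =>
    intro m hm
    rw [List.map_cons, List.prod_cons, ← mul_assoc]
    rcases List.mem_cons.mp hm with h | h
    · subst h; rw [sq_zero xm hxm, zero_mul]
    · rw [hxm m t, neg_mul, mul_assoc, ih m h, mul_zero, neg_zero]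

lemma prod_not_nodup (xm : ℤ → Module.End ℂ W)
    (hxm : ∀ l l' : ℤ, xm l * xm l' = -(xm l' * xm l)) :
    ∀ l : List ℤ, ¬ l.Nodup → (l.map xm).prod = 0 := by
  intro l
  induction l with
  | nil => intro h; exact absurd List.nodup_nil h
  | cons t l ih =>
    intro h
    rw [List.map_cons, List.prod_cons]
    by_cases ht : t ∈ l
    · rw [mul_prod_mem xm hxm l t ht]
    · have hl : ¬ l.Nodup := fun hn => h (List.nodup_cons.mpr ⟨ht, hn⟩)
      rw [ih hl, mul_zero]

lemma br_apply (xa xm : ℤ → Module.End ℂ W) (c b k : ℂ)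
    (hbr : ∀ m l : ℤ, xa m * xm l + xm l * xa m =
      if m + l = 0 then (c + (m : ℂ) * b * k) • (1 : Module.End ℂ W) else 0)
    (m t : ℤ) (w : W) :
    xa m (xm t w) = (if m + t = 0 then (c + (m:ℂ)*b*k) • w else 0) - xm t (xa m w) := by
  have h := DFunLike.congr_fun (hbr m t) w
  split_ifs at h ⊢ with hc
  · simp only [LinearMap.add_apply, Module.End.mul_apply, LinearMap.smul_apply,
      Module.End.one_apply] at h
    exact eq_sub_of_add_eq h
  · simp only [LinearMap.add_apply, Module.End.mul_apply, LinearMap.zero_apply] at h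
    exact eq_sub_of_add_eq h

lemma xa_prod_zero (xa xm : ℤ → Module.End ℂ W) (c b k : ℂ) (v : W)
    (hbr : ∀ m l : ℤ, xa m * xm l + xm l * xa m =
      if m + l = 0 then (c + (m : ℂ) * b * k) • (1 : Module.End ℂ W) else 0)
    (hv : ∀ m : ℤ, xa m v = 0) :
    ∀ (l : List ℤ) (m : ℤ), (∀ t ∈ l, m + t ≠ 0) →
      xa m ((l.map xm).prod v) = 0 := by
  intro l
  induction l with
  | nil => intro m _; simpa using hv m
  | cons t l ih =>
    intro m hm
    rw [List.map_cons, List.prod_cons, Module.End.mul_apply,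
      br_apply xa xm c b k hbr, if_neg (hm t (List.mem_cons_self)),
      ih m (fun s hs => hm s (List.mem_cons_of_mem t hs)), map_zero, zero_sub, neg_zero]

lemma xa_prod_mem (xa xm : ℤ → Module.End ℂ W) (c b k : ℂ) (v : W)
    (hbr : ∀ m l : ℤ, xa m * xm l + xm l * xa m =
      if m + l = 0 then (c + (m : ℂ) * b * k) • (1 : Module.End ℂ W) else 0)
    (hv : ∀ m : ℤ, xa m v = 0) :
    ∀ (l : List ℤ), l.Nodup → ∀ m : ℤ, (-m) ∈ l →
      ∃ ε : ℂ, xa m ((l.map xm).prod v) =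
        (ε * (c + (m:ℂ) * b * k)) • ((l.erase (-m)).map xm).prod v := by
  intro l
  induction l with
  | nil => intro _ m hm; simp at hm
  | cons t l ih =>
    intro hnd m hm
    rw [List.map_cons, List.prod_cons, Module.End.mul_apply,
      br_apply xa xm c b k hbr]
    by_cases hcase : t = -m
    · subst hcase
      have h0 : xa m ((l.map xm).prod v) = 0 := by
        apply xa_prod_zero xa xm c b k v hbr hv
        intro s hs h
        have hsm : s = -m := by omega
        exact (List.nodup_cons.mp hnd).1 (hsm ▸ hs)
      rw [h0, map_zero, sub_zero, if_pos (by omega)]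
      refine ⟨1, ?_⟩
      rw [List.erase_cons_head, one_mul]
    · have hml : (-m) ∈ l := by
        rcases List.mem_cons.mp hm with h | h
        · exact absurd h.symm hcase
        · exact h
      obtain ⟨ε, hε⟩ := ih (List.nodup_cons.mp hnd).2 m hml
      refine ⟨-ε, ?_⟩
      rw [if_neg (by omega), zero_sub, hε, map_smul]
      have herase : (t :: l).erase (-m) = t :: l.erase (-m) := by
        rw [List.erase_cons_tail]
        simpa using hcase
      rw [herase, List.map_cons, List.prod_cons, Module.End.mul_apply,
        ← smul_neg]
      rw [neg_mul, neg_smul, smul_neg]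

lemma d_prod (xm : ℤ → Module.End ℂ W) (d : Module.End ℂ W) (v : W)
    (hdxm : ∀ m : ℤ, d * xm m - xm m * d = -(m : ℂ) • xm m)
    (hdv : d v = 0) :
    ∀ l : List ℤ, d ((l.map xm).prod v) = (-(l.sum : ℂ)) • (l.map xm).prod v := by
  intro l
  induction l with
  | nil => simpa using hdv
  | cons t l ih =>
    rw [List.map_cons, List.prod_cons, Module.End.mul_apply]
    have h := DFunLike.congr_fun (hdxm t) ((l.map xm).prod v)
    simp only [LinearMap.sub_apply, Module.End.mul_apply, LinearMap.smul_apply] at h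
    have : d (xm t ((l.map xm).prod v)) =
        xm t (d ((l.map xm).prod v)) + (-(t:ℂ)) • xm t ((l.map xm).prod v) := by
      have := eq_add_of_sub_eq h
      simpa [add_comm] using this
    rw [this, ih, map_smul, ← add_smul]
    congr 1
    push_cast [List.sum_cons]
    ring

lemma chain_eval (xa xm : ℤ → Module.End ℂ W) (c b k : ℂ) (v : W)
    (hbr : ∀ m l : ℤ, xa m * xm l + xm l * xa m =
      if m + l = 0 then (c + (m : ℂ) * b * k) • (1 : Module.End ℂ W) else 0)
    (hv : ∀ m : ℤ, xa m v = 0) :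
    ∀ l : List ℤ, l.Nodup →
      ((l.reverse.map (fun t => xa (-t))).prod) ((l.map xm).prod v) =
        ((l.map (fun t : ℤ => c - (t:ℂ) * b * k)).prod) • v := by
  intro l
  induction l with
  | nil => simp
  | cons t l ih =>
    intro hnd
    rw [List.reverse_cons, List.map_append, List.prod_append]
    simp only [List.map_cons, List.map_nil, List.prod_cons, List.prod_nil, mul_one]
    rw [Module.End.mul_apply, Module.End.mul_apply,
      br_apply xa xm c b k hbr, if_pos (by omega)]
    have h0 : xa (-t) ((l.map xm).prod v) = 0 := by
      apply xa_prod_zero xa xm c b k v hbr hv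
      intro s hs h
      have hst : s = t := by omega
      exact (List.nodup_cons.mp hnd).1 (hst ▸ hs)
    rw [h0, map_zero, sub_zero, map_smul, ih (List.nodup_cons.mp hnd).2, smul_smul]
    congr 1
    push_cast
    ring

end AffSL11Aux

theorem affine_sl11_weight_space_zero_iff
    {W : Type*} [AddCommGroup W] [Module ℂ W]
    (xa xm : ℤ → Module.End ℂ W) (d : Module.End ℂ W) (c k b : ℂ) (v : W)
    (hxa : ∀ m m' : ℤ, xa m * xa m' = -(xa m' * xa m))
    (hxm : ∀ l l' : ℤ, xm l * xm l' = -(xm l' * xm l))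
    (hbr : ∀ m l : ℤ, xa m * xm l + xm l * xa m =
      if m + l = 0 then (c + (m : ℂ) * b * k) • (1 : Module.End ℂ W) else 0)
    (hdxa : ∀ m : ℤ, d * xa m - xa m * d = -(m : ℂ) • xa m)
    (hdxm : ∀ m : ℤ, d * xm m - xm m * d = -(m : ℂ) • xm m)
    (hv : ∀ m : ℤ, xa m v = 0) (hdv : d v = 0) (hv0 : v ≠ 0)
    (hsimple : ∀ U : Submodule ℂ W,
      (∀ m, ∀ w ∈ U, xa m w ∈ U) → (∀ m, ∀ w ∈ U, xm m w ∈ U) →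
      (∀ w ∈ U, d w ∈ U) → U = ⊥ ∨ U = ⊤)
    (n : ℕ) (ℓ : ℤ) :
    Submodule.span ℂ
        {w : W | ∃ l : List ℤ, l.Nodup ∧ l.length = n ∧ l.sum = ℓ ∧
          w = (l.map xm).prod v} = ⊥ ↔
      ∀ l : List ℤ, l.Nodup → l.length = n → l.sum = ℓ →
        (l.map (fun t : ℤ => c - (t : ℂ) * b * k)).prod = 0 := by
  open AffSL11Aux in
  constructor
  · intro h0 l hnd hlen hsum
    have hw : (l.map xm).prod v ∈ Submodule.span ℂ
        {w : W | ∃ l : List ℤ, l.Nodup ∧ l.length = n ∧ l.sum = ℓ ∧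
          w = (l.map xm).prod v} :=
      Submodule.subset_span ⟨l, hnd, hlen, hsum, rfl⟩
    rw [h0, Submodule.mem_bot] at hw
    have hc := AffSL11Aux.chain_eval xa xm c b k v hbr hv l hnd
    rw [hw, map_zero] at hc
    rcases smul_eq_zero.mp hc.symm with h | h
    · exact h
    · exact absurd h hv0
  · intro hall
    set f : ℤ → ℂ := fun t => c - (t:ℂ) * b * k with hf
    set S : Set W := {w | ∃ l : List ℤ, l.Nodup ∧ (l.map f).prod = 0 ∧
      w = (l.map xm).prod v} with hS
    suffices hU : Submodule.span ℂ S = ⊥ by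
      rw [eq_bot_iff, ← hU]
      apply Submodule.span_le.mpr
      rintro w ⟨l, hnd, hlen, hsum, rfl⟩
      exact Submodule.subset_span ⟨l, hnd, hall l hnd hlen hsum, rfl⟩
    have hUxm : ∀ m, ∀ w ∈ Submodule.span ℂ S, xm m w ∈ Submodule.span ℂ S := by
      intro m w hw
      induction hw using Submodule.span_induction with
      | mem x hx =>
        obtain ⟨l, hnd, hp, rfl⟩ := hx
        by_cases hm : m ∈ l
        · have hz : xm m ((l.map xm).prod v) = 0 := by
            rw [← Module.End.mul_apply, AffSL11Aux.mul_prod_mem xm hxm l m hm,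
              LinearMap.zero_apply]
          rw [hz]; exact Submodule.zero_mem _
        · apply Submodule.subset_span
          refine ⟨m :: l, List.nodup_cons.mpr ⟨hm, hnd⟩, ?_, ?_⟩
          · rw [List.map_cons, List.prod_cons, hp, mul_zero]
          · rw [List.map_cons, List.prod_cons, Module.End.mul_apply]
      | zero => simpa using Submodule.zero_mem _
      | add x y hx hy ihx ihy => rw [map_add]; exact Submodule.add_mem _ ihx ihy
      | smul a x hx ihx => rw [map_smul]; exact Submodule.smul_mem _ a ihx
    have hUd : ∀ w ∈ Submodule.span ℂ S, d w ∈ Submodule.span ℂ S := by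
      intro w hw
      induction hw using Submodule.span_induction with
      | mem x hx =>
        obtain ⟨l, hnd, hp, rfl⟩ := hx
        rw [AffSL11Aux.d_prod xm d v hdxm hdv l]
        exact Submodule.smul_mem _ _ (Submodule.subset_span ⟨l, hnd, hp, rfl⟩)
      | zero => simpa using Submodule.zero_mem _
      | add x y hx hy ihx ihy => rw [map_add]; exact Submodule.add_mem _ ihx ihy
      | smul a x hx ihx => rw [map_smul]; exact Submodule.smul_mem _ a ihx
    have hUxa : ∀ m, ∀ w ∈ Submodule.span ℂ S, xa m w ∈ Submodule.span ℂ S := by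
      intro m w hw
      induction hw using Submodule.span_induction with
      | mem x hx =>
        obtain ⟨l, hnd, hp, rfl⟩ := hx
        by_cases hm : (-m) ∈ l
        · obtain ⟨ε, hε⟩ := AffSL11Aux.xa_prod_mem xa xm c b k v hbr hv l hnd m hm
          rw [hε]
          have hperm : l.Perm ((-m) :: l.erase (-m)) := List.perm_cons_erase hm
          have hsplit : (l.map f).prod = f (-m) * ((l.erase (-m)).map f).prod := by
            rw [(hperm.map f).prod_eq, List.map_cons, List.prod_cons]
          rw [hsplit] at hp
          rcases mul_eq_zero.mp hp with h | h
          · have hz : c + (m:ℂ) * b * k = 0 := by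
              have h2 : c - ((-m : ℤ) : ℂ) * b * k = 0 := h
              push_cast at h2 ⊢
              linear_combination h2
            rw [hz, mul_zero, zero_smul]
            exact Submodule.zero_mem _
          · exact Submodule.smul_mem _ _
              (Submodule.subset_span ⟨l.erase (-m), hnd.erase _, h, rfl⟩)
        · have hz : xa m ((l.map xm).prod v) = 0 := by
            apply AffSL11Aux.xa_prod_zero xa xm c b k v hbr hv
            intro t ht hmt
            apply hm
            have : -m = t := by omega
            rwa [this]
          rw [hz]; exact Submodule.zero_mem _
      | zero => simpa using Submodule.zero_mem _
      | add x y hx hy ihx ihy => rw [map_add]; exact Submodule.add_mem _ ihx ihy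
      | smul a x hx ihx => rw [map_smul]; exact Submodule.smul_mem _ a ihx
    rcases hsimple (Submodule.span ℂ S) hUxa hUxm hUd with h | h
    · exact h
    exfalso
    have hv_mem : v ∈ Submodule.span ℂ S := h ▸ Submodule.mem_top
    obtain ⟨N, cf, g, hg⟩ := Submodule.mem_span_set'.mp hv_mem
    have hlists : ∀ i : Fin N, ∃ l : List ℤ, l.Nodup ∧ (l.map f).prod = 0 ∧
        (g i : W) = (l.map xm).prod v := fun i => (g i).2
    choose li hnd_li hp_li hg_li using hlists
    set T : Finset ℤ := Finset.univ.biUnion (fun i : Fin N => (li i).toFinset) with hT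
    have hTl : ∀ i, ∀ t ∈ li i, t ∈ T := by
      intro i t ht
      exact Finset.mem_biUnion.mpr ⟨i, Finset.mem_univ i, List.mem_toFinset.mpr ht⟩
    have hne : ∀ i, (li i) ≠ [] := by
      intro i hnil
      have := hp_li i
      rw [hnil] at this
      simp at this
    set M : ℕ → Submodule ℂ W := fun j => Submodule.span ℂ
      {w | ∃ l : List ℤ, l.Nodup ∧ (∀ t ∈ l, t ∈ T) ∧ j ≤ l.length ∧
        w = (l.map xm).prod v} with hM
    have hstep : ∀ j, ∀ i : Fin N, ∀ w ∈ M j, ((li i).map xm).prod w ∈ M (j+1) := by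
      intro j i w hw
      induction hw using Submodule.span_induction with
      | mem x hx =>
        obtain ⟨l, hnd, hTmem, hlen, rfl⟩ := hx
        by_cases hdup : (li i ++ l).Nodup
        · apply Submodule.subset_span
          refine ⟨li i ++ l, hdup, ?_, ?_, ?_⟩
          · intro t ht
            rcases List.mem_append.mp ht with hh | hh
            · exact hTl i t hh
            · exact hTmem t hh
          · rw [List.length_append]
            have h1 : 0 < (li i).length := List.length_pos_iff.mpr (hne i)
            omega
          · rw [List.map_append, List.prod_append, Module.End.mul_apply]
        · have hz : ((li i).map xm).prod ((l.map xm).prod v) = 0 := by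
            rw [← Module.End.mul_apply, ← List.prod_append, ← List.map_append,
              AffSL11Aux.prod_not_nodup xm hxm _ hdup, LinearMap.zero_apply]
          rw [hz]; exact Submodule.zero_mem _
      | zero => simpa using Submodule.zero_mem _
      | add x y hx hy ihx ihy => rw [map_add]; exact Submodule.add_mem _ ihx ihy
      | smul a x hx ihx => rw [map_smul]; exact Submodule.smul_mem _ a ihx
    have hvM : ∀ j, v ∈ M j := by
      intro j
      induction j with
      | zero =>
        apply Submodule.subset_span
        exact ⟨[], List.nodup_nil, by simp, by simp, by simp⟩
      | succ j ih =>
        rw [← hg]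
        apply Submodule.sum_mem
        intro i _
        apply Submodule.smul_mem
        rw [hg_li i]
        exact hstep j i v ih
    have hbot : M (T.card + 1) ≤ ⊥ := by
      apply Submodule.span_le.mpr
      rintro w ⟨l, hnd, hTmem, hlen, rfl⟩
      exfalso
      have h1 : l.toFinset ⊆ T := fun t ht => hTmem t (List.mem_toFinset.mp ht)
      have h2 : l.toFinset.card = l.length := List.toFinset_card_of_nodup hnd
      have h3 := Finset.card_le_card h1
      omega
    exact hv0 (Submodule.mem_bot ℂ |>.mp (hbot (hvM _)))
end

section
/- Suppose [ℌ_X, K^±] = 0 and ℌ_X⁺ acts trivially on a K-module F which is a simple subquotient of the standard Verma module M_K(λ), with λ(K) ≠ 0. Then the induced M-module Ind^M_{K ⊕ ℌ_X⁺} F is a simple M-module; as a vector space it equals U(ℌ_X⁻) ⊗ F. -/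
/-!
STATEMENT 17: Suppose [ℌ_X, K^±] = 0 and ℌ_X⁺ acts trivially on a K-module F
which is a simple subquotient of the standard Verma module M_K(λ), with λ(K) ≠ 0.
Then the induced M-module Ind^M_{K ⊕ ℌ_X⁺} F is simple; as a vector space it
equals U(ℌ_X⁻) ⊗ F.

Since ℌ_X⁻ is abelian, U(ℌ_X⁻) is a polynomial algebra, and by PBW the induced
module is the vector space ℂ[x₀,x₁,…] ⊗ F on which: the lowering part ℌ_X⁻ acts
by multiplication on the first factor, the raising part ℌ_X⁺ acts by the scaled
derivatives (i+1)·λ(K)·∂/∂xᵢ on the first factor (forced by the Heisenberg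
relations with central charge λ(K)), and K acts on the second factor (commuting
with ℌ_X).  F is a simple K-module which is a subquotient of a Verma module, so
it is countably generated; the K-action is encoded by an arbitrary family of
operators ρ s under which F is irreducible.  The conclusion is that any subspace
of the induced module invariant under all these operators is 0 or everything.
-/

open TensorProduct

noncomputable def MvPolynomial.scalarRTensor {σ R N : Type*} [DecidableEq σ] [CommSemiring R]
    [AddCommMonoid N] [Module R N] : MvPolynomial σ R ⊗[R] N ≃ₗ[R] (σ →₀ ℕ) →₀ N :=
  (TensorProduct.congr (AddMonoidAlgebra.coeffLinearEquiv R) (LinearEquiv.refl R N)).trans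
    (TensorProduct.finsuppScalarLeft R N _)

lemma MvPolynomial.scalarRTensor_apply_tmul_apply {σ R N : Type*} [DecidableEq σ] [CommSemiring R]
    [AddCommMonoid N] [Module R N] (p : MvPolynomial σ R) (n : N) (d : σ →₀ ℕ) :
    MvPolynomial.scalarRTensor (p ⊗ₜ[R] n) d = MvPolynomial.coeff d p • n := by
  simp [MvPolynomial.scalarRTensor]
  rfl

lemma MvPolynomial.scalarRTensor_symm_apply_single {σ R N : Type*} [DecidableEq σ] [CommSemiring R]
    [AddCommMonoid N] [Module R N] (d : σ →₀ ℕ) (n : N) :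
    MvPolynomial.scalarRTensor.symm (Finsupp.single d n) =
      (MvPolynomial.monomial d (1 : R)) ⊗ₜ[R] n := by
  simp [MvPolynomial.scalarRTensor]
  rfl

lemma coeff_pderiv_aux (i : ℕ) (p : MvPolynomial ℕ ℂ) (c : ℕ →₀ ℕ) :
    MvPolynomial.coeff c (MvPolynomial.pderiv i p)
      = ((c i : ℂ) + 1) * MvPolynomial.coeff (c + Finsupp.single i 1) p := by
  induction p using MvPolynomial.induction_on' with
  | add p q hp hq => simp [hp, hq, mul_add]
  | monomial d a =>
    rw [MvPolynomial.pderiv_monomial, MvPolynomial.coeff_monomial,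
      MvPolynomial.coeff_monomial]
    by_cases h : d = c + Finsupp.single i 1
    · subst h
      rw [if_pos (add_tsub_cancel_right _ _)]
      simp [mul_comm]
    · rw [if_neg h]
      by_cases h2 : d - Finsupp.single i 1 = c
      · rw [if_pos h2]
        have hdi : d i = 0 := by
          by_contra hdi
          apply h
          rw [← h2, tsub_add_cancel_of_le]
          rwa [Finsupp.single_le_iff, Nat.one_le_iff_ne_zero]
        simp [hdi]
      · simp [if_neg h2]

lemma key_deriv (F : Type*) [AddCommGroup F] [Module ℂ F] (i : ℕ)
    (u : TensorProduct ℂ (MvPolynomial ℕ ℂ) F) (c : ℕ →₀ ℕ) :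
    MvPolynomial.scalarRTensor
      (LinearMap.rTensor F (MvPolynomial.pderiv i).toLinearMap u) c
      = ((c i : ℂ) + 1) • MvPolynomial.scalarRTensor u (c + Finsupp.single i 1) := by
  induction u using TensorProduct.induction_on with
  | zero => simp
  | tmul p w =>
      rw [LinearMap.rTensor_tmul, Derivation.coeFn_coe,
        MvPolynomial.scalarRTensor_apply_tmul_apply,
        MvPolynomial.scalarRTensor_apply_tmul_apply, coeff_pderiv_aux, mul_smul]
  | add x y hx hy => simp [hx, hy]

lemma one_tmul_eq (F : Type*) [AddCommGroup F] [Module ℂ F] (w : F) :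
    MvPolynomial.scalarRTensor ((1 : MvPolynomial ℕ ℂ) ⊗ₜ[ℂ] w) = Finsupp.single 0 w := by
  have := MvPolynomial.scalarRTensor_symm_apply_single (R := ℂ) (σ := ℕ) (N := F)
    (0 : ℕ →₀ ℕ) w
  rw [MvPolynomial.monomial_zero', MvPolynomial.C_1] at this
  rw [← this, LinearEquiv.apply_symm_apply]

theorem induced_module_from_heisenberg_simple
    (lamK : ℂ) (hlam : lamK ≠ 0)
    (F : Type*) [AddCommGroup F] [Module ℂ F]
    (S : Type*) (ρ : S → Module.End ℂ F)
    (hFne : ∃ w : F, w ≠ 0)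
    -- F is a subquotient of a Verma module, hence countable-dimensional
    (hcount : ∃ gen : ℕ → F, Submodule.span ℂ (Set.range gen) = ⊤)
    (hsimple : ∀ U : Submodule ℂ F, (∀ s, ∀ w ∈ U, ρ s w ∈ U) → U = ⊥ ∨ U = ⊤) :
    ∀ U : Submodule ℂ (TensorProduct ℂ (MvPolynomial ℕ ℂ) F),
      (∀ i : ℕ, ∀ u ∈ U,
        LinearMap.rTensor F (LinearMap.mulLeft ℂ (MvPolynomial.X i)) u ∈ U) →
      (∀ i : ℕ, ∀ u ∈ U,
        LinearMap.rTensor F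
          ((((i : ℂ) + 1) * lamK) • (MvPolynomial.pderiv i).toLinearMap) u ∈ U) →
      (∀ s : S, ∀ u ∈ U, LinearMap.lTensor (MvPolynomial ℕ ℂ) (ρ s) u ∈ U) →
      U = ⊥ ∨ U = ⊤ := by
  intro U hX hD hK
  by_cases hU : U = ⊥
  · exact Or.inl hU
  right
  -- U is closed under the unscaled derivatives
  have hD' : ∀ i : ℕ, ∀ u ∈ U,
      LinearMap.rTensor F (MvPolynomial.pderiv i).toLinearMap u ∈ U := by
    intro i u hu
    have ha : ((i : ℂ) + 1) * lamK ≠ 0 :=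
      mul_ne_zero (Nat.cast_add_one_ne_zero i) hlam
    have h1 := hD i u hu
    rw [LinearMap.rTensor_smul] at h1
    have h2 := U.smul_mem ((((i : ℂ) + 1) * lamK)⁻¹) h1
    rwa [LinearMap.smul_apply, inv_smul_smul₀ ha] at h2
  -- descent: produce a nonzero element of the form 1 ⊗ w in U
  have descend : ∀ n : ℕ, ∀ u ∈ U, u ≠ 0 →
      (∀ c ∈ (MvPolynomial.scalarRTensor u).support, c.sum (fun _ k => k) ≤ n) →
      ∃ w : F, w ≠ 0 ∧ (1 : MvPolynomial ℕ ℂ) ⊗ₜ[ℂ] w ∈ U := by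
    intro n
    induction n with
    | zero =>
      intro u hu hune hbd
      have hsub : (MvPolynomial.scalarRTensor u).support ⊆ {0} := by
        intro c hc
        have := hbd c hc
        have hc0 : c = 0 := by
          ext j
          by_contra hj
          have hjs : j ∈ c.support := Finsupp.mem_support_iff.mpr hj
          have : 1 ≤ c.sum fun _ k => k :=
            le_trans (Nat.one_le_iff_ne_zero.mpr hj)
              (Finset.single_le_sum (fun _ _ => Nat.zero_le _) hjs)
          omega
        simp [hc0]
      rw [Finsupp.support_subset_singleton] at hsub
      refine ⟨MvPolynomial.scalarRTensor u 0, ?_, ?_⟩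
      · intro h0
        apply hune
        have : MvPolynomial.scalarRTensor u = 0 := by rw [hsub, h0, Finsupp.single_zero]
        exact (map_eq_zero_iff _ MvPolynomial.scalarRTensor.injective).mp this
      · have : MvPolynomial.scalarRTensor u
            = MvPolynomial.scalarRTensor
              ((1 : MvPolynomial ℕ ℂ) ⊗ₜ[ℂ] MvPolynomial.scalarRTensor u 0) := by
          rw [one_tmul_eq]; exact hsub
        have := MvPolynomial.scalarRTensor.injective this
        rwa [this] at hu
    | succ n ih =>
      intro u hu hune hbd
      by_cases hsub : (MvPolynomial.scalarRTensor u).support ⊆ {0}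
      · rw [Finsupp.support_subset_singleton] at hsub
        refine ⟨MvPolynomial.scalarRTensor u 0, ?_, ?_⟩
        · intro h0
          apply hune
          have : MvPolynomial.scalarRTensor u = 0 := by
            rw [hsub, h0, Finsupp.single_zero]
          exact (map_eq_zero_iff _ MvPolynomial.scalarRTensor.injective).mp this
        · have : MvPolynomial.scalarRTensor u
              = MvPolynomial.scalarRTensor
                ((1 : MvPolynomial ℕ ℂ) ⊗ₜ[ℂ] MvPolynomial.scalarRTensor u 0) := by
            rw [one_tmul_eq]; exact hsub
          have := MvPolynomial.scalarRTensor.injective this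
          rwa [this] at hu
      · -- there is a support element d ≠ 0; differentiate
        obtain ⟨d, hd, hdne⟩ : ∃ d ∈ (MvPolynomial.scalarRTensor u).support, d ≠ 0 := by
          by_contra h
          push_neg at h
          exact hsub fun c hc => by simp [h c hc]
        obtain ⟨i, hi⟩ : ∃ i, d i ≠ 0 := by
          by_contra h
          push_neg at h
          exact hdne (Finsupp.ext h)
        set u' := LinearMap.rTensor F (MvPolynomial.pderiv i).toLinearMap u with hu'def
        have hu'U : u' ∈ U := hD' i u hu
        have hle : Finsupp.single i 1 ≤ d := by
          rwa [Finsupp.single_le_iff, Nat.one_le_iff_ne_zero]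
        have hdd : (d - Finsupp.single i 1) + Finsupp.single i 1 = d :=
          tsub_add_cancel_of_le hle
        have hval : MvPolynomial.scalarRTensor u' (d - Finsupp.single i 1)
            = ((((d - Finsupp.single i 1 : ℕ →₀ ℕ) i : ℕ) : ℂ) + 1) •
              MvPolynomial.scalarRTensor u d := by
          rw [hu'def, key_deriv, hdd]
        have hvne : MvPolynomial.scalarRTensor u' (d - Finsupp.single i 1) ≠ 0 := by
          rw [hval]
          exact smul_ne_zero (Nat.cast_add_one_ne_zero _)
            (Finsupp.mem_support_iff.mp hd)
        have hu'ne : u' ≠ 0 := by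
          intro h0
          apply hvne
          rw [h0, map_zero]
          rfl
        refine ih u' hu'U hu'ne ?_
        intro c hc
        have hcs : MvPolynomial.scalarRTensor u (c + Finsupp.single i 1) ≠ 0 := by
          intro h0
          apply Finsupp.mem_support_iff.mp hc
          rw [hu'def, key_deriv, h0, smul_zero]
        have hbd2 := hbd _ (Finsupp.mem_support_iff.mpr hcs)
        rw [Finsupp.sum_add_index' (fun _ => rfl) (fun _ _ _ => rfl)] at hbd2
        rw [Finsupp.sum_single_index rfl] at hbd2
        omega
  -- get a nonzero element of U and apply descent
  obtain ⟨u0, hu0U, hu0⟩ : ∃ u ∈ U, u ≠ 0 := by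
    by_contra h
    push_neg at h
    exact hU ((Submodule.eq_bot_iff U).mpr h)
  obtain ⟨w0, hw0, hw0U⟩ := descend
    ((MvPolynomial.scalarRTensor u0).support.sup fun c => c.sum fun _ k => k)
    u0 hu0U hu0 (fun c hc => Finset.le_sup (f := fun c => c.sum fun _ k => k) hc)
  -- the set of w with 1 ⊗ w ∈ U is all of F
  set W : Submodule ℂ F :=
    U.comap ((TensorProduct.mk ℂ (MvPolynomial ℕ ℂ) F) 1) with hWdef
  have hWinv : ∀ s, ∀ w ∈ W, ρ s w ∈ W := by
    intro s w hw
    show (1 : MvPolynomial ℕ ℂ) ⊗ₜ[ℂ] (ρ s w) ∈ U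
    have := hK s _ hw
    simpa [TensorProduct.mk_apply, LinearMap.lTensor_tmul] using this
  have hWtop : W = ⊤ := by
    rcases hsimple W hWinv with h | h
    · exact absurd (h ▸ hw0U : w0 ∈ (⊥ : Submodule ℂ F)) (by simpa using hw0)
    · exact h
  have hone : ∀ w : F, (1 : MvPolynomial ℕ ℂ) ⊗ₜ[ℂ] w ∈ U := by
    intro w
    have : w ∈ W := hWtop ▸ Submodule.mem_top
    exact this
  -- every pure tensor is in U, hence U = ⊤
  have hpure : ∀ (p : MvPolynomial ℕ ℂ) (w : F), p ⊗ₜ[ℂ] w ∈ U := by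
    intro p w
    induction p using MvPolynomial.induction_on with
    | C a =>
      have : (MvPolynomial.C a : MvPolynomial ℕ ℂ) ⊗ₜ[ℂ] w
          = a • ((1 : MvPolynomial ℕ ℂ) ⊗ₜ[ℂ] w) := by
        rw [smul_tmul', MvPolynomial.C_eq_smul_one]
      rw [this]
      exact U.smul_mem a (hone w)
    | add p q hp hq =>
      rw [add_tmul]
      exact U.add_mem hp hq
    | mul_X p i hp =>
      have := hX i _ hp
      rw [LinearMap.rTensor_tmul, LinearMap.mulLeft_apply, mul_comm] at this
      exact this
  rw [eq_top_iff]
  intro u _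
  induction u using TensorProduct.induction_on with
  | zero => exact U.zero_mem
  | tmul p w => exact hpure p w
  | add x y hx hy => exact U.add_mem (hx Submodule.mem_top) (hy Submodule.mem_top)
end
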